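/- arXiv:2201.02761 — 7 statements merged into one kernel-verified Lean document; each statement's English description precedes it below -/
import Mathlib

section
/- Suppose the reduced gradient-flow system holds with s(0) > 0, and define t₂ := inf{t ≥ 0 : P(t) ≥ s(t)} (with t₂ = ∞ if no such t exists). Then s'(t) ≤ 0 for every t ∈ [0, t₂), and, if t₂ < ∞, s'(t) ≥ 0 for every t ≥ t₂; that is, the induced weight norm first decreases and then increases. -/
open Filter Topology

theorem stmt11
    (N d dy dx : ℕ) (hN : 2 ≤ N) (hd : 1 ≤ d) (hdy : d ≤ dy) (hdx : d ≤ dx)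
    (σ : ℕ → ℝ)
    (hσpos : ∀ i, 1 ≤ i → i ≤ d → 0 < σ i)
    (hσmono : ∀ i j, 1 ≤ i → i < j → j ≤ d → σ j < σ i)
    (hσzero : ∀ i, d < i → σ i = 0)
    (s : ℝ → ℝ) (a b : ℕ → ℝ → ℝ) (P : ℝ → ℝ)
    (hs_nonneg : ∀ t, 0 ≤ t → 0 ≤ s t)
    (ha_norm : ∀ t, 0 ≤ t → ∑ i ∈ Finset.Icc 1 dy, (a i t) ^ 2 = 1)
    (hb_norm : ∀ t, 0 ≤ t → ∑ j ∈ Finset.Icc 1 dx, (b j t) ^ 2 = 1)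
    (hP : ∀ t, P t = ∑ j ∈ Finset.Icc 1 d, σ j * a j t * b j t)
    (hs' : ∀ t, 0 ≤ t →
      HasDerivAt s ((N : ℝ) * s t ^ ((2 : ℝ) - 2 / (N : ℝ)) * (P t - s t)) t)
    (ha' : ∀ i, 1 ≤ i → i ≤ dy → ∀ t, 0 ≤ t →
      HasDerivAt (a i) (s t ^ ((1 : ℝ) - 2 / (N : ℝ)) * (σ i * b i t - a i t * P t)) t)
    (hb' : ∀ j, 1 ≤ j → j ≤ dx → ∀ t, 0 ≤ t →
      HasDerivAt (b j) (s t ^ ((1 : ℝ) - 2 / (N : ℝ)) * (σ j * a j t - b j t * P t)) t)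
    (hs0 : 0 < s 0) :
    (∀ t, 0 ≤ t → (∀ u, 0 ≤ u → s u ≤ P u → t < u) → deriv s t ≤ 0) ∧
    ({u : ℝ | 0 ≤ u ∧ s u ≤ P u}.Nonempty →
      ∀ t, sInf {u : ℝ | 0 ≤ u ∧ s u ≤ P u} ≤ t → 0 ≤ deriv s t) := by
  have hNpos : (0:ℝ) < N := by positivity
  have hrpow2 : ∀ t, 0 ≤ t → 0 ≤ s t ^ ((2 : ℝ) - 2 / (N : ℝ)) :=
    fun t ht => Real.rpow_nonneg (hs_nonneg t ht) _
  have hrpow1 : ∀ t, 0 ≤ t → 0 ≤ s t ^ ((1 : ℝ) - 2 / (N : ℝ)) :=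
    fun t ht => Real.rpow_nonneg (hs_nonneg t ht) _
  -- Cauchy–Schwarz : 2 P² ≤ Q
  have hCS : ∀ t, 0 ≤ t →
      2 * P t ^ 2 ≤ ∑ j ∈ Finset.Icc 1 d, σ j ^ 2 * ((a j t) ^ 2 + (b j t) ^ 2) := by
    intro t ht
    have hsub_y : Finset.Icc 1 d ⊆ Finset.Icc 1 dy := Finset.Icc_subset_Icc_right hdy
    have hsub_x : Finset.Icc 1 d ⊆ Finset.Icc 1 dx := Finset.Icc_subset_Icc_right hdx
    have hb1 : ∑ j ∈ Finset.Icc 1 d, (b j t) ^ 2 ≤ 1 := by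
      rw [← hb_norm t ht]
      exact Finset.sum_le_sum_of_subset_of_nonneg hsub_x (fun j _ _ => sq_nonneg _)
    have ha1 : ∑ j ∈ Finset.Icc 1 d, (a j t) ^ 2 ≤ 1 := by
      rw [← ha_norm t ht]
      exact Finset.sum_le_sum_of_subset_of_nonneg hsub_y (fun j _ _ => sq_nonneg _)
    have hA : (0:ℝ) ≤ ∑ j ∈ Finset.Icc 1 d, σ j ^ 2 * (a j t) ^ 2 :=
      Finset.sum_nonneg fun j _ => mul_nonneg (sq_nonneg _) (sq_nonneg _)
    have hB : (0:ℝ) ≤ ∑ j ∈ Finset.Icc 1 d, σ j ^ 2 * (b j t) ^ 2 :=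
      Finset.sum_nonneg fun j _ => mul_nonneg (sq_nonneg _) (sq_nonneg _)
    have h1 : P t ^ 2 ≤ ∑ j ∈ Finset.Icc 1 d, σ j ^ 2 * (a j t) ^ 2 := by
      have := Finset.sum_mul_sq_le_sq_mul_sq (Finset.Icc 1 d)
        (fun j => σ j * a j t) (fun j => b j t)
      have heq : P t = ∑ j ∈ Finset.Icc 1 d, (σ j * a j t) * b j t := hP t
      calc P t ^ 2 = (∑ j ∈ Finset.Icc 1 d, (σ j * a j t) * b j t) ^ 2 := by rw [heq]
        _ ≤ (∑ j ∈ Finset.Icc 1 d, (σ j * a j t) ^ 2) *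
            (∑ j ∈ Finset.Icc 1 d, (b j t) ^ 2) := this
        _ ≤ (∑ j ∈ Finset.Icc 1 d, (σ j * a j t) ^ 2) * 1 := by
            refine mul_le_mul_of_nonneg_left hb1 ?_
            exact Finset.sum_nonneg fun j _ => sq_nonneg _
        _ = ∑ j ∈ Finset.Icc 1 d, σ j ^ 2 * (a j t) ^ 2 := by
            rw [mul_one]; exact Finset.sum_congr rfl fun j _ => by ring
    have h2 : P t ^ 2 ≤ ∑ j ∈ Finset.Icc 1 d, σ j ^ 2 * (b j t) ^ 2 := by
      have := Finset.sum_mul_sq_le_sq_mul_sq (Finset.Icc 1 d)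
        (fun j => σ j * b j t) (fun j => a j t)
      have heq : P t = ∑ j ∈ Finset.Icc 1 d, (σ j * b j t) * a j t := by
        rw [hP t]; exact Finset.sum_congr rfl fun j _ => by ring
      calc P t ^ 2 = (∑ j ∈ Finset.Icc 1 d, (σ j * b j t) * a j t) ^ 2 := by rw [heq]
        _ ≤ (∑ j ∈ Finset.Icc 1 d, (σ j * b j t) ^ 2) *
            (∑ j ∈ Finset.Icc 1 d, (a j t) ^ 2) := this
        _ ≤ (∑ j ∈ Finset.Icc 1 d, (σ j * b j t) ^ 2) * 1 := by
            refine mul_le_mul_of_nonneg_left ha1 ?_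
            exact Finset.sum_nonneg fun j _ => sq_nonneg _
        _ = ∑ j ∈ Finset.Icc 1 d, σ j ^ 2 * (b j t) ^ 2 := by
            rw [mul_one]; exact Finset.sum_congr rfl fun j _ => by ring
    calc 2 * P t ^ 2 = P t ^ 2 + P t ^ 2 := by ring
      _ ≤ (∑ j ∈ Finset.Icc 1 d, σ j ^ 2 * (a j t) ^ 2)
          + (∑ j ∈ Finset.Icc 1 d, σ j ^ 2 * (b j t) ^ 2) := add_le_add h1 h2
      _ = ∑ j ∈ Finset.Icc 1 d, σ j ^ 2 * ((a j t) ^ 2 + (b j t) ^ 2) := by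
          rw [← Finset.sum_add_distrib]
          exact Finset.sum_congr rfl fun j _ => by ring
  -- derivative of P
  have hPd : ∀ t, 0 ≤ t → HasDerivAt P
      (s t ^ ((1 : ℝ) - 2 / (N : ℝ)) *
        ((∑ j ∈ Finset.Icc 1 d, σ j ^ 2 * ((a j t) ^ 2 + (b j t) ^ 2)) - 2 * P t ^ 2)) t := by
    intro t ht
    have hPfun : P = fun u => ∑ j ∈ Finset.Icc 1 d, σ j * a j u * b j u := funext hP
    rw [hPfun]
    have hsum : HasDerivAt (fun u => ∑ j ∈ Finset.Icc 1 d, σ j * a j u * b j u)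
        (∑ j ∈ Finset.Icc 1 d, σ j *
          ((s t ^ ((1 : ℝ) - 2 / (N : ℝ)) * (σ j * b j t - a j t * P t)) * b j t +
            a j t * (s t ^ ((1 : ℝ) - 2 / (N : ℝ)) * (σ j * a j t - b j t * P t)))) t := by
      apply HasDerivAt.fun_sum
      intro j hj
      obtain ⟨hj1, hjd⟩ := Finset.mem_Icc.mp hj
      have haj := ha' j hj1 (hjd.trans hdy) t ht
      have hbj := hb' j hj1 (hjd.trans hdx) t ht
      simpa [mul_assoc] using (haj.mul hbj).const_mul (σ j)
    convert hsum using 1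
    rw [← hPfun]
    rw [show (2:ℝ) * P t ^ 2
        = 2 * P t * (∑ j ∈ Finset.Icc 1 d, σ j * a j t * b j t) by rw [← hP t]; ring]
    rw [mul_sub, Finset.mul_sum, Finset.mul_sum, Finset.mul_sum, ← Finset.sum_sub_distrib]
    exact Finset.sum_congr rfl fun j hj => by ring
  -- P is monotone on [0, ∞)
  have hPmono : MonotoneOn P (Set.Ici (0:ℝ)) := by
    apply monotoneOn_of_deriv_nonneg (convex_Ici 0)
    · exact fun t ht => ((hPd t ht).continuousAt).continuousWithinAt
    · intro t ht
      rw [interior_Ici] at ht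
      exact ((hPd t (le_of_lt ht)).differentiableAt).differentiableWithinAt
    · intro t ht
      rw [interior_Ici] at ht
      have ht' : (0:ℝ) ≤ t := le_of_lt ht
      rw [(hPd t ht').deriv]
      exact mul_nonneg (hrpow1 t ht') (by linarith [hCS t ht'])
  constructor
  · -- before t₂ the derivative is nonpositive
    intro t ht h
    have hPs : P t < s t := by
      by_contra hc
      push_neg at hc
      exact lt_irrefl t (h t ht hc)
    rw [(hs' t ht).deriv]
    have : P t - s t ≤ 0 := by linarith
    exact mul_nonpos_of_nonneg_of_nonpos (mul_nonneg (le_of_lt hNpos) (hrpow2 t ht)) this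
  · -- after t₂ the derivative is nonnegative
    intro hne
    set S : Set ℝ := {u : ℝ | 0 ≤ u ∧ s u ≤ P u} with hS
    have hScont : ∀ t, (0:ℝ) ≤ t → ContinuousAt (fun u => P u - s u) t :=
      fun t ht => ((hPd t ht).continuousAt).sub ((hs' t ht).continuousAt)
    have hSclosed : IsClosed S := by
      have : S = Set.Ici (0:ℝ) ∩ (fun u => P u - s u) ⁻¹' Set.Ici (0:ℝ) := by
        ext u
        simp only [hS, Set.mem_setOf_eq, Set.mem_inter_iff, Set.mem_Ici, Set.mem_preimage]
        constructor
        · rintro ⟨h1, h2⟩; exact ⟨h1, by linarith⟩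
        · rintro ⟨h1, h2⟩; exact ⟨h1, by linarith⟩
      rw [this]
      exact ContinuousOn.preimage_isClosed_of_isClosed
        (fun u hu => (hScont u hu).continuousWithinAt) isClosed_Ici isClosed_Ici
    have hSbdd : BddBelow S := ⟨0, fun u hu => hu.1⟩
    have ht2mem : sInf S ∈ S := hSclosed.csInf_mem hne hSbdd
    set t₂ : ℝ := sInf S with ht2
    have ht2nn : (0:ℝ) ≤ t₂ := ht2mem.1
    -- key claim: s ≤ P on [t₂, ∞)
    have hkey : ∀ t, t₂ ≤ t → s t ≤ P t := by
      intro t htt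
      by_contra hc
      push_neg at hc
      have htne : t₂ ≠ t := by
        intro h; rw [← h] at hc; exact absurd ht2mem.2 (not_le.mpr hc)
      have ht2lt : t₂ < t := lt_of_le_of_ne htt htne
      have htnn : (0:ℝ) ≤ t := le_trans ht2nn htt
      set A : Set ℝ := Set.Icc t₂ t ∩ (fun u => P u - s u) ⁻¹' Set.Ici (0:ℝ) with hA
      have hAclosed : IsClosed A := by
        refine ContinuousOn.preimage_isClosed_of_isClosed ?_ isClosed_Icc isClosed_Ici
        exact fun u hu => (hScont u (le_trans ht2nn hu.1)).continuousWithinAt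
      have hAne : A.Nonempty := ⟨t₂, ⟨le_refl _, le_of_lt ht2lt⟩, by
        simpa using ht2mem.2⟩
      have hAbdd : BddAbove A := ⟨t, fun u hu => hu.1.2⟩
      have hwmem : sSup A ∈ A := hAclosed.csSup_mem hAne hAbdd
      set w : ℝ := sSup A with hw
      have hwt2 : t₂ ≤ w := hwmem.1.1
      have hwt : w ≤ t := hwmem.1.2
      have hwP : s w ≤ P w := by
        have := hwmem.2; simp [Set.mem_preimage, Set.mem_Ici] at this; linarith
      have hwlt : w < t := by
        rcases lt_or_eq_of_le hwt with h | h
        · exact h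
        · exfalso; rw [h] at hwP; exact absurd hwP (not_le.mpr hc)
      -- on (w, t], P < s
      have hmid : ∀ u, w < u → u ≤ t → P u < s u := by
        intro u hwu hut
        by_contra hcc
        push_neg at hcc
        have : u ∈ A := ⟨⟨le_trans hwt2 (le_of_lt hwu), hut⟩, by
          simp [Set.mem_preimage, Set.mem_Ici]; linarith⟩
        exact absurd (le_csSup hAbdd this) (not_le.mpr hwu)
      -- s is antitone on [w, t]
      have hs_anti : AntitoneOn s (Set.Icc w t) := by
        apply antitoneOn_of_deriv_nonpos (convex_Icc w t)
        · intro u hu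
          exact ((hs' u (le_trans ht2nn (le_trans hwt2 hu.1))).continuousAt).continuousWithinAt
        · intro u hu
          rw [interior_Icc] at hu
          exact ((hs' u (le_trans ht2nn (le_trans hwt2 (le_of_lt hu.1)))).differentiableAt).differentiableWithinAt
        · intro u hu
          rw [interior_Icc] at hu
          have hu0 : (0:ℝ) ≤ u := le_trans ht2nn (le_trans hwt2 (le_of_lt hu.1))
          rw [(hs' u hu0).deriv]
          have : P u - s u ≤ 0 := by linarith [hmid u hu.1 (le_of_lt hu.2)]
          exact mul_nonpos_of_nonneg_of_nonpos
            (mul_nonneg (le_of_lt hNpos) (hrpow2 u hu0)) this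
      have h1 : s t ≤ s w := hs_anti ⟨le_refl w, hwt⟩ ⟨le_of_lt hwlt, le_refl t⟩ (le_of_lt hwlt)
      have h2 : P w ≤ P t := hPmono (Set.mem_Ici.mpr (le_trans ht2nn hwt2))
        (Set.mem_Ici.mpr htnn) hwt
      linarith
    intro t htt
    have htnn : (0:ℝ) ≤ t := le_trans ht2nn htt
    rw [(hs' t htnn).deriv]
    have : (0:ℝ) ≤ P t - s t := by linarith [hkey t htt]
    exact mul_nonneg (mul_nonneg (le_of_lt hNpos) (hrpow2 t htnn)) this
end

section
/- Suppose the reduced gradient-flow system holds with s(0) > 0, and set s₀ := max{s_1, s(0)}. Then for all t ≥ 0: 0 < s(t) ≤ s₀; moreover, if N = 2 then s(t) ≥ s(0)·e^{−2(s_1+s₀)t}, and if N ≥ 3 then s(t) ≥ ((s_1+s₀)·(N−2)·t + s(0)^{2/N−1})^{−N/(N−2)}. -/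
open Filter Topology

set_option maxHeartbeats 800000 in
theorem stmt12
    (N d dy dx : ℕ) (hN : 2 ≤ N) (hd : 1 ≤ d) (hdy : d ≤ dy) (hdx : d ≤ dx)
    (σ : ℕ → ℝ)
    (hσpos : ∀ i, 1 ≤ i → i ≤ d → 0 < σ i)
    (hσmono : ∀ i j, 1 ≤ i → i < j → j ≤ d → σ j < σ i)
    (hσzero : ∀ i, d < i → σ i = 0)
    (s : ℝ → ℝ) (a b : ℕ → ℝ → ℝ) (P : ℝ → ℝ)
    (hs_nonneg : ∀ t, 0 ≤ t → 0 ≤ s t)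
    (ha_norm : ∀ t, 0 ≤ t → ∑ i ∈ Finset.Icc 1 dy, (a i t) ^ 2 = 1)
    (hb_norm : ∀ t, 0 ≤ t → ∑ j ∈ Finset.Icc 1 dx, (b j t) ^ 2 = 1)
    (hP : ∀ t, P t = ∑ j ∈ Finset.Icc 1 d, σ j * a j t * b j t)
    (hs' : ∀ t, 0 ≤ t →
      HasDerivAt s ((N : ℝ) * s t ^ ((2 : ℝ) - 2 / (N : ℝ)) * (P t - s t)) t)
    (ha' : ∀ i, 1 ≤ i → i ≤ dy → ∀ t, 0 ≤ t →
      HasDerivAt (a i) (s t ^ ((1 : ℝ) - 2 / (N : ℝ)) * (σ i * b i t - a i t * P t)) t)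
    (hb' : ∀ j, 1 ≤ j → j ≤ dx → ∀ t, 0 ≤ t →
      HasDerivAt (b j) (s t ^ ((1 : ℝ) - 2 / (N : ℝ)) * (σ j * a j t - b j t * P t)) t)
    (hs0 : 0 < s 0) :
    ∀ t, 0 ≤ t →
      0 < s t ∧ s t ≤ max (σ 1) (s 0) ∧
      (N = 2 → s 0 * Real.exp (-(2 * (σ 1 + max (σ 1) (s 0)) * t)) ≤ s t) ∧
      (3 ≤ N →
        ((σ 1 + max (σ 1) (s 0)) * ((N : ℝ) - 2) * t + s 0 ^ ((2 : ℝ) / (N : ℝ) - 1))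
            ^ (-(N : ℝ) / ((N : ℝ) - 2)) ≤ s t) := by
  have hσ1 : 0 < σ 1 := hσpos 1 le_rfl hd
  -- bound on P
  have hPb : ∀ t, 0 ≤ t → |P t| ≤ σ 1 := by
    intro t ht
    have hσle : ∀ j ∈ Finset.Icc 1 d, σ j ≤ σ 1 := by
      intro j hj
      simp only [Finset.mem_Icc] at hj
      rcases eq_or_lt_of_le hj.1 with h | h
      · exact (h ▸ le_rfl)
      · exact (hσmono 1 j le_rfl h hj.2).le
    have h1 : |P t| ≤ ∑ j ∈ Finset.Icc 1 d, σ 1 * (((a j t) ^ 2 + (b j t) ^ 2) / 2) := by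
      rw [hP]
      refine (Finset.abs_sum_le_sum_abs _ _).trans (Finset.sum_le_sum ?_)
      intro j hj
      have hσj : 0 < σ j := by
        simp only [Finset.mem_Icc] at hj; exact hσpos j hj.1 hj.2
      have habs : |a j t * b j t| ≤ ((a j t) ^ 2 + (b j t) ^ 2) / 2 := by
        rw [abs_le]
        constructor <;> nlinarith [sq_nonneg (a j t + b j t), sq_nonneg (a j t - b j t)]
      calc |σ j * a j t * b j t| = σ j * |a j t * b j t| := by
            rw [mul_assoc, abs_mul, abs_of_pos hσj]
        _ ≤ σ 1 * (((a j t) ^ 2 + (b j t) ^ 2) / 2) :=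
            mul_le_mul (hσle j hj) habs (abs_nonneg _) hσ1.le
    have hsub : ∀ (dz : ℕ) (f : ℕ → ℝ → ℝ), d ≤ dz →
        (∑ i ∈ Finset.Icc 1 dz, (f i t) ^ 2 = 1) →
        ∑ j ∈ Finset.Icc 1 d, (f j t) ^ 2 ≤ 1 := by
      intro dz f hdz hnorm
      rw [← hnorm]
      exact Finset.sum_le_sum_of_subset_of_nonneg (Finset.Icc_subset_Icc_right hdz)
        (fun i _ _ => sq_nonneg _)
    have ha1 := hsub dy a hdy (ha_norm t ht)
    have hb1 := hsub dx b hdx (hb_norm t ht)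
    have heq : ∑ j ∈ Finset.Icc 1 d, σ 1 * (((a j t) ^ 2 + (b j t) ^ 2) / 2)
        = σ 1 * ((∑ j ∈ Finset.Icc 1 d, (a j t) ^ 2) + ∑ j ∈ Finset.Icc 1 d, (b j t) ^ 2) / 2 := by
      rw [← Finset.mul_sum, ← Finset.sum_div, Finset.sum_add_distrib]
      ring
    rw [heq] at h1
    nlinarith
  set s₀ := max (σ 1) (s 0) with hs₀def
  have hs₀pos : 0 < s₀ := lt_of_lt_of_le hσ1 (le_max_left _ _)
  set c := σ 1 + s₀ with hcdef
  have hc : 0 < c := by positivity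
  have hNpos : (0:ℝ) < (N:ℝ) := by positivity
  have hN2 : (2:ℝ) ≤ (N:ℝ) := by exact_mod_cast hN
  have hp : (0:ℝ) < (2 : ℝ) - 2 / (N : ℝ) := by
    have : 2 / (N:ℝ) ≤ 1 := by rw [div_le_one hNpos]; linarith
    linarith
  -- upper bound
  have hupper : ∀ t, 0 ≤ t → s t ≤ s₀ := by
    intro t ht
    have key : ∀ ε > (0:ℝ), s t ≤ s₀ + ε * (1 + t) := by
      intro ε hε
      have hB' : ∀ x, HasDerivAt (fun x => s₀ + ε * (1 + x)) ε x := by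
        intro x
        simpa using (((hasDerivAt_id x).const_add (1:ℝ)).const_mul ε).const_add s₀
      have := image_le_of_deriv_right_lt_deriv_boundary'
        (f := s) (f' := fun x => (N : ℝ) * s x ^ ((2 : ℝ) - 2 / (N : ℝ)) * (P x - s x))
        (a := 0) (b := t) (B := fun x => s₀ + ε * (1 + x)) (B' := fun _ => ε)
        (fun x hx => ((hs' x hx.1).continuousAt).continuousWithinAt)
        (fun x hx => (hs' x hx.1).hasDerivWithinAt)
        (by simp; nlinarith [le_max_right (σ 1) (s 0)])
        (fun x hx => ((hB' x).continuousAt).continuousWithinAt)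
        (fun x hx => (hB' x).hasDerivWithinAt)
        ?_ (Set.right_mem_Icc.2 ht)
      · exact this
      · intro x hx heq'
        have heq : s x = s₀ + ε * (1 + x) := heq'
        have hx0 : 0 ≤ x := hx.1
        have hsx : 0 < s x := by rw [heq]; nlinarith
        have hsp : 0 < s x ^ ((2 : ℝ) - 2 / (N : ℝ)) := Real.rpow_pos_of_pos hsx _
        have hPx : P x ≤ σ 1 := (abs_le.1 (hPb x hx0)).2
        have hneg : P x - s x < 0 := by
          rw [heq]; have := le_max_left (σ 1) (s 0); nlinarith
        show (N : ℝ) * s x ^ ((2 : ℝ) - 2 / (N : ℝ)) * (P x - s x) < ε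
        nlinarith [mul_pos (mul_pos hNpos hsp) (neg_pos.2 hneg)]
    refine le_of_forall_pos_le_add fun ε hε => ?_
    have h1t : (0:ℝ) < 1 + t := by linarith
    have := key (ε / (1 + t)) (by positivity)
    rw [div_mul_eq_mul_div, mul_div_assoc, div_self (ne_of_gt h1t), mul_one] at this
    linarith
  -- generic lower bound
  have hlower : ∀ (L L' : ℝ → ℝ),
      (∀ x, 0 ≤ x → HasDerivAt L (L' x) x) →
      (∀ x, 0 ≤ x → 0 < L x) →
      (L 0 = s 0) →
      (∀ x, 0 ≤ x → L' x = -((N:ℝ) * c * L x ^ ((2 : ℝ) - 2 / (N : ℝ)))) →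
      ∀ t, 0 ≤ t → L t ≤ s t := by
    intro L L' hL hLpos hL0 hL'
    intro t ht
    have key : ∀ ε > (0:ℝ), -s t ≤ -L t + ε * (1 + t) := by
      intro ε hε
      have hεlin : ∀ x : ℝ, HasDerivAt (fun x => ε * (1 + x)) ε x := by
        intro x
        simpa using ((hasDerivAt_id x).const_add (1:ℝ)).const_mul ε
      have hB' : ∀ x, 0 ≤ x → HasDerivAt (fun x => -L x + ε * (1 + x)) (-L' x + ε) x :=
        fun x hx => ((hL x hx).neg).add (hεlin x)
      have := image_le_of_deriv_right_lt_deriv_boundary'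
        (f := fun x => -s x)
        (f' := fun x => -((N : ℝ) * s x ^ ((2 : ℝ) - 2 / (N : ℝ)) * (P x - s x)))
        (a := 0) (b := t) (B := fun x => -L x + ε * (1 + x)) (B' := fun x => -L' x + ε)
        (fun x hx => (((hs' x hx.1).continuousAt).neg).continuousWithinAt)
        (fun x hx => ((hs' x hx.1).neg).hasDerivWithinAt)
        (by simp [hL0]; linarith)
        (fun x hx => ((hB' x hx.1).continuousAt).continuousWithinAt)
        (fun x hx => (hB' x hx.1).hasDerivWithinAt)
        ?_ (Set.right_mem_Icc.2 ht)
      · exact this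
      · intro x hx heq'
        have heq : -s x = -L x + ε * (1 + x) := heq'
        have hx0 : 0 ≤ x := hx.1
        have hsltL : s x < L x := by nlinarith
        have hLx := hLpos x hx0
        have hL'x := hL' x hx0
        show -((N : ℝ) * s x ^ ((2 : ℝ) - 2 / (N : ℝ)) * (P x - s x)) < -L' x + ε
        rw [hL'x]
        have hsx0 : 0 ≤ s x := hs_nonneg x hx0
        rcases eq_or_lt_of_le hsx0 with h0 | hsx
        · rw [← h0, Real.zero_rpow (ne_of_gt hp)]
          have h4 : (0:ℝ) < L x ^ ((2 : ℝ) - 2 / (N : ℝ)) := Real.rpow_pos_of_pos hLx _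
          have h5 : -((N:ℝ) * 0 * (P x - 0)) = 0 := by ring
          rw [h5]
          nlinarith [mul_pos (mul_pos hNpos hc) h4]
        · have hrlt : s x ^ ((2 : ℝ) - 2 / (N : ℝ)) < L x ^ ((2 : ℝ) - 2 / (N : ℝ)) :=
            Real.rpow_lt_rpow hsx0 hsltL hp
          have hsp : 0 ≤ s x ^ ((2 : ℝ) - 2 / (N : ℝ)) := Real.rpow_nonneg hsx0 _
          have hPx : -σ 1 ≤ P x := (abs_le.1 (hPb x hx0)).1
          have hsub : s x ≤ s₀ := hupper x hx0
          have h1 : s x - P x ≤ c := by rw [hcdef]; linarith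
          have h2 : s x ^ ((2 : ℝ) - 2 / (N : ℝ)) * (s x - P x)
              ≤ s x ^ ((2 : ℝ) - 2 / (N : ℝ)) * c := mul_le_mul_of_nonneg_left h1 hsp
          have h3 : s x ^ ((2 : ℝ) - 2 / (N : ℝ)) * c
              < L x ^ ((2 : ℝ) - 2 / (N : ℝ)) * c := mul_lt_mul_of_pos_right hrlt hc
          have h6 : (N:ℝ) * (s x ^ ((2 : ℝ) - 2 / (N : ℝ)) * (s x - P x))
              < (N:ℝ) * (L x ^ ((2 : ℝ) - 2 / (N : ℝ)) * c) :=
            mul_lt_mul_of_pos_left (lt_of_le_of_lt h2 h3) hNpos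
          nlinarith [h6]
    have hall : ∀ ε > (0:ℝ), -s t ≤ -L t + ε := by
      intro ε hε
      have h1t : (0:ℝ) < 1 + t := by linarith
      have := key (ε / (1 + t)) (by positivity)
      rw [div_mul_eq_mul_div, mul_div_assoc, div_self (ne_of_gt h1t), mul_one] at this
      linarith
    have := le_of_forall_pos_le_add hall
    linarith
  -- instantiate the two comparison solutions
  have case2 : N = 2 → ∀ t, 0 ≤ t → s 0 * Real.exp (-(2 * c * t)) ≤ s t := by
    intro h2
    refine hlower (fun x => s 0 * Real.exp (-(2 * c * x)))
      (fun x => s 0 * (Real.exp (-(2 * c * x)) * (-(2 * c)))) ?_ ?_ ?_ ?_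
    · intro x _
      have h : HasDerivAt (fun x : ℝ => -(2 * c * x)) (-(2 * c)) x := by
        have h0 := ((hasDerivAt_id' x).const_mul (2 * c)).neg; rw [mul_one] at h0; exact h0
      exact (h.exp).const_mul (s 0)
    · intro x _; positivity
    · simp
    · intro x _
      have hcast : (N : ℝ) = 2 := by rw [h2]; norm_num
      rw [hcast, show ((2:ℝ) - 2/(2:ℝ)) = (1:ℝ) by norm_num, Real.rpow_one]
      ring
  have case3 : 3 ≤ N → ∀ t, 0 ≤ t →
      (c * ((N:ℝ) - 2) * t + s 0 ^ ((2:ℝ)/(N:ℝ) - 1)) ^ (-(N:ℝ)/((N:ℝ) - 2)) ≤ s t := by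
    intro h3
    have hN3 : (3:ℝ) ≤ (N:ℝ) := by exact_mod_cast h3
    have hNm2 : (0:ℝ) < (N:ℝ) - 2 := by linarith
    set q : ℝ := (2:ℝ)/(N:ℝ) - 1 with hqdef
    set e : ℝ := -(N:ℝ)/((N:ℝ) - 2) with hedef
    set X : ℝ → ℝ := fun x => c * ((N:ℝ) - 2) * x + s 0 ^ q with hXdef
    have hXpos : ∀ x, 0 ≤ x → 0 < X x := by
      intro x hx
      have : 0 < s 0 ^ q := Real.rpow_pos_of_pos hs0 _
      have : 0 ≤ c * ((N:ℝ) - 2) * x := by positivity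
      simp only [hXdef]
      nlinarith [Real.rpow_pos_of_pos hs0 q]
    have hXder : ∀ x : ℝ, HasDerivAt X (c * ((N:ℝ) - 2)) x := by
      intro x
      have h0 := ((hasDerivAt_id' x).const_mul (c * ((N:ℝ) - 2))).add_const (s 0 ^ q); rw [mul_one] at h0; exact h0
    have hep : e * ((2:ℝ) - 2 / (N:ℝ)) = e - 1 := by
      rw [hedef]; field_simp; ring
    refine hlower (fun x => X x ^ e)
      (fun x => e * X x ^ (e - 1) * (c * ((N:ℝ) - 2))) ?_ ?_ ?_ ?_
    · intro x hx
      have h := (hXder x).rpow_const (p := e) (Or.inl (ne_of_gt (hXpos x hx)))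
      show HasDerivAt (fun x => X x ^ e) (e * X x ^ (e - 1) * (c * ((N:ℝ) - 2))) x
      convert h using 1
      ring
    · intro x hx
      exact Real.rpow_pos_of_pos (hXpos x hx) _
    · show X 0 ^ e = s 0
      have hX0 : X 0 = s 0 ^ q := by simp [hXdef]
      rw [hX0, ← Real.rpow_mul hs0.le]
      have : q * e = 1 := by rw [hqdef, hedef]; field_simp; ring
      rw [this, Real.rpow_one]
    · intro x hx
      show e * X x ^ (e - 1) * (c * ((N:ℝ) - 2))
          = -((N:ℝ) * c * (X x ^ e) ^ ((2:ℝ) - 2 / (N:ℝ)))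
      rw [← Real.rpow_mul (hXpos x hx).le, hep]
      have hkey : e * (c * ((N:ℝ) - 2)) = -((N:ℝ) * c) := by
        rw [hedef]; field_simp
      linear_combination (X x ^ (e - 1)) * hkey
  -- conclude
  intro t ht
  have hup := hupper t ht
  rcases eq_or_lt_of_le hN with h2 | h3
  · have h2' : N = 2 := h2.symm
    have hlow := case2 h2' t ht
    have hLpos : 0 < s 0 * Real.exp (-(2 * c * t)) := by positivity
    exact ⟨lt_of_lt_of_le hLpos hlow, hup, fun _ => hlow,
      fun h => absurd (h2' ▸ h) (by norm_num)⟩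
  · have h3' : 3 ≤ N := h3
    have hlow := case3 h3' t ht
    have hNm2 : (0:ℝ) < (N:ℝ) - 2 := by
      have : (3:ℝ) ≤ (N:ℝ) := by exact_mod_cast h3'
      linarith
    have hXpos : 0 < c * ((N:ℝ) - 2) * t + s 0 ^ ((2:ℝ)/(N:ℝ) - 1) := by
      have := Real.rpow_pos_of_pos hs0 ((2:ℝ)/(N:ℝ) - 1)
      nlinarith [mul_nonneg (mul_nonneg hc.le hNm2.le) ht]
    have hLpos : 0 < (c * ((N:ℝ) - 2) * t + s 0 ^ ((2:ℝ)/(N:ℝ) - 1)) ^ (-(N:ℝ)/((N:ℝ) - 2)) :=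
      Real.rpow_pos_of_pos hXpos _
    exact ⟨lt_of_lt_of_le hLpos hlow, hup,
      fun h => absurd h (by omega), fun _ => hlow⟩
end

section
/- Suppose the reduced gradient-flow system holds with N ≥ 3, s(0) > 0, and 0 < a_1(0)·b_1(0) < 1. Set s₀ := max{s_1, s(0)}, A := a_1(0)b_1(0)/(1 − a_1(0)b_1(0)), B := (s_1+s₀)·s(0)^{1−2/N}, and c₂ := 2(s_1 − s_2)/(s_1 + s₀) (with s_2 := 0 if d = 1). Then for every t ≥ 0, a_1(t)·b_1(t) ≥ 1 − 1/(A·(1 + B·(N−2)·t)^{c₂/(N−2)} + 1). -/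
open Filter Topology

lemma aux_ratio (c₂ B E S κ n U : ℝ) (hE : E ≠ 0) (hn : n ≠ 0) (h : c₂ * B = 2*κ*S) :
    (c₂/n) * (U / E) * (B*n) = (2*κ) * (S/E) * U := by
  field_simp
  linear_combination U * h

lemma aux_nonneg (f f' : ℝ → ℝ)
    (hf : ∀ t, 0 ≤ t → HasDerivAt f (f' t) t)
    (h0 : 0 ≤ f 0)
    (hkey : ∀ t, 0 ≤ t → f t ≤ 0 → 0 ≤ f' t) :
    ∀ t, 0 ≤ t → 0 ≤ f t := by
  intro T hT
  by_contra hneg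
  push_neg at hneg
  have hcont : ContinuousOn f (Set.Icc 0 T) :=
    fun x hx => ((hf x hx.1).continuousAt).continuousWithinAt
  set S : Set ℝ := Set.Icc 0 T ∩ f ⁻¹' (Set.Ici 0) with hS
  have hS0 : (0:ℝ) ∈ S := ⟨⟨le_refl 0, hT⟩, h0⟩
  have hSbdd : BddAbove S := ⟨T, fun x hx => hx.1.2⟩
  have hSclosed : IsClosed S :=
    hcont.preimage_isClosed_of_isClosed isClosed_Icc isClosed_Ici
  set t1 := sSup S with ht1
  have ht1S : t1 ∈ S := hSclosed.csSup_mem ⟨0, hS0⟩ hSbdd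
  have ht1T : t1 < T := by
    rcases lt_or_eq_of_le ht1S.1.2 with h | h
    · exact h
    · exfalso
      have : (0:ℝ) ≤ f T := by rw [← h]; exact ht1S.2
      exact absurd this (not_le.mpr hneg)
  have hmono : MonotoneOn f (Set.Icc t1 T) := by
    have hint : interior (Set.Icc t1 T) = Set.Ioo t1 T := interior_Icc
    apply monotoneOn_of_deriv_nonneg (convex_Icc t1 T)
    · intro x hx
      exact ((hf x (le_trans ht1S.1.1 hx.1)).continuousAt).continuousWithinAt
    · rw [hint]
      intro x hx
      exact ((hf x (le_trans ht1S.1.1 hx.1.le)).differentiableAt).differentiableWithinAt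
    · rw [hint]
      intro x hx
      have hx0 : (0:ℝ) ≤ x := le_trans ht1S.1.1 hx.1.le
      have hfx : f x ≤ 0 := by
        by_contra h
        push_neg at h
        have : x ∈ S := ⟨⟨hx0, hx.2.le⟩, h.le⟩
        exact absurd (le_csSup hSbdd this) (not_le.mpr hx.1)
      rw [(hf x hx0).deriv]
      exact hkey x hx0 hfx
  have := hmono (Set.left_mem_Icc.mpr ht1T.le) (Set.right_mem_Icc.mpr ht1T.le) ht1T.le
  exact absurd (le_trans ht1S.2 this) (not_le.mpr hneg)

lemma aux_nonpos (f f' : ℝ → ℝ)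
    (hf : ∀ t, 0 ≤ t → HasDerivAt f (f' t) t)
    (h0 : f 0 ≤ 0)
    (hkey : ∀ t, 0 ≤ t → 0 ≤ f t → f' t ≤ 0) :
    ∀ t, 0 ≤ t → f t ≤ 0 := by
  intro t ht
  have := aux_nonneg (fun x => -f x) (fun x => -f' x)
    (fun x hx => (hf x hx).neg) (by simpa using h0)
    (fun x hx hfx => by simpa using hkey x hx (by simpa using hfx)) t ht
  simpa using this

set_option maxHeartbeats 8000000 in
theorem stmt14
    (N d dy dx : ℕ) (hN : 2 ≤ N) (hd : 1 ≤ d) (hdy : d ≤ dy) (hdx : d ≤ dx)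
    (σ : ℕ → ℝ)
    (hσpos : ∀ i, 1 ≤ i → i ≤ d → 0 < σ i)
    (hσmono : ∀ i j, 1 ≤ i → i < j → j ≤ d → σ j < σ i)
    (hσzero : ∀ i, d < i → σ i = 0)
    (s : ℝ → ℝ) (a b : ℕ → ℝ → ℝ) (P : ℝ → ℝ)
    (hs_nonneg : ∀ t, 0 ≤ t → 0 ≤ s t)
    (ha_norm : ∀ t, 0 ≤ t → ∑ i ∈ Finset.Icc 1 dy, (a i t) ^ 2 = 1)
    (hb_norm : ∀ t, 0 ≤ t → ∑ j ∈ Finset.Icc 1 dx, (b j t) ^ 2 = 1)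
    (hP : ∀ t, P t = ∑ j ∈ Finset.Icc 1 d, σ j * a j t * b j t)
    (hs' : ∀ t, 0 ≤ t →
      HasDerivAt s ((N : ℝ) * s t ^ ((2 : ℝ) - 2 / (N : ℝ)) * (P t - s t)) t)
    (ha' : ∀ i, 1 ≤ i → i ≤ dy → ∀ t, 0 ≤ t →
      HasDerivAt (a i) (s t ^ ((1 : ℝ) - 2 / (N : ℝ)) * (σ i * b i t - a i t * P t)) t)
    (hb' : ∀ j, 1 ≤ j → j ≤ dx → ∀ t, 0 ≤ t →
      HasDerivAt (b j) (s t ^ ((1 : ℝ) - 2 / (N : ℝ)) * (σ j * a j t - b j t * P t)) t)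
    (hN3 : 3 ≤ N) (hs0 : 0 < s 0)
    (hab : 0 < a 1 0 * b 1 0) (hab1 : a 1 0 * b 1 0 < 1)
    (A B c₂ : ℝ)
    (hA : A = a 1 0 * b 1 0 / (1 - a 1 0 * b 1 0))
    (hB : B = (σ 1 + max (σ 1) (s 0)) * s 0 ^ ((1 : ℝ) - 2 / (N : ℝ)))
    (hc₂ : c₂ = 2 * (σ 1 - σ 2) / (σ 1 + max (σ 1) (s 0))) :
    ∀ t, 0 ≤ t →
      1 - 1 / (A * (1 + B * ((N : ℝ) - 2) * t) ^ (c₂ / ((N : ℝ) - 2)) + 1) ≤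
        a 1 t * b 1 t := by
  -- ## basic numeric facts
  have hd1y : 1 ≤ dy := le_trans hd hdy
  have hd1x : 1 ≤ dx := le_trans hd hdx
  have hNR : (3:ℝ) ≤ (N:ℝ) := by exact_mod_cast hN3
  have hN0 : (0:ℝ) < (N:ℝ) := by linarith
  have hNne : (N:ℝ) ≠ 0 := ne_of_gt hN0
  have hN2pos : (0:ℝ) < (N:ℝ) - 2 := by linarith
  have hN2ne : (N:ℝ) - 2 ≠ 0 := ne_of_gt hN2pos
  have hp : (0:ℝ) < 1 - 2/(N:ℝ) := by
    have : 2/(N:ℝ) ≤ 2/3 := by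
      apply div_le_div_of_nonneg_left (by norm_num) (by norm_num) hNR
    linarith
  have hpne : (1:ℝ) - 2/(N:ℝ) ≠ 0 := ne_of_gt hp
  have hq : (0:ℝ) < 2 - 2/(N:ℝ) := by linarith
  have hσ1 : 0 < σ 1 := hσpos 1 le_rfl hd
  have hσ2nn : 0 ≤ σ 2 := by
    rcases lt_or_ge d 2 with h | h
    · rw [hσzero 2 h]
    · exact (hσpos 2 one_le_two h).le
  have hσ21 : σ 2 < σ 1 := by
    rcases lt_or_ge d 2 with h | h
    · rw [hσzero 2 h]; exact hσ1
    · exact hσmono 1 2 le_rfl one_lt_two h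
  have hκ : 0 < σ 1 - σ 2 := by linarith
  set s₀ : ℝ := max (σ 1) (s 0) with hs₀_def
  have hs₀σ : σ 1 ≤ s₀ := le_max_left _ _
  have hs₀0 : s 0 ≤ s₀ := le_max_right _ _
  have hs₀pos : 0 < s₀ := lt_of_lt_of_le hσ1 hs₀σ
  have hApos : 0 < A := by rw [hA]; exact div_pos hab (by linarith)
  have hBpos : 0 < B := by
    rw [hB]
    exact mul_pos (by linarith) (Real.rpow_pos_of_pos hs0 _)
  have hσle1 : ∀ j, 1 ≤ j → j ≤ d → σ j ≤ σ 1 := by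
    intro j h1 h2
    rcases eq_or_lt_of_le h1 with h | h
    · rw [← h]
    · exact (hσmono 1 j le_rfl h h2).le
  have hσle2 : ∀ j, 2 ≤ j → j ≤ d → σ j ≤ σ 2 := by
    intro j h1 h2
    rcases eq_or_lt_of_le h1 with h | h
    · rw [← h]
    · exact (hσmono 2 j one_le_two h h2).le
  have hσnn : ∀ j, 1 ≤ j → j ≤ d → 0 ≤ σ j := fun j h1 h2 => (hσpos j h1 h2).le
  -- ## square bounds
  have ha1sq : ∀ t, 0 ≤ t → (a 1 t)^2 ≤ 1 := by
    intro t ht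
    rw [← ha_norm t ht]
    exact Finset.single_le_sum (f := fun i => (a i t)^2)
      (fun j _ => sq_nonneg (a j t)) (Finset.mem_Icc.mpr ⟨le_rfl, hd1y⟩)
  have hb1sq : ∀ t, 0 ≤ t → (b 1 t)^2 ≤ 1 := by
    intro t ht
    rw [← hb_norm t ht]
    exact Finset.single_le_sum (f := fun i => (b i t)^2)
      (fun j _ => sq_nonneg (b j t)) (Finset.mem_Icc.mpr ⟨le_rfl, hd1x⟩)
  have hsum_a : ∀ t, 0 ≤ t → ∑ i ∈ Finset.Icc 1 d, (a i t)^2 ≤ 1 := by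
    intro t ht
    have h := Finset.sum_le_sum_of_subset_of_nonneg (f := fun i => (a i t)^2)
      (Finset.Icc_subset_Icc (le_refl 1) hdy) (fun i _ _ => sq_nonneg (a i t))
    rw [ha_norm t ht] at h
    exact h
  have hsum_b : ∀ t, 0 ≤ t → ∑ i ∈ Finset.Icc 1 d, (b i t)^2 ≤ 1 := by
    intro t ht
    have h := Finset.sum_le_sum_of_subset_of_nonneg (f := fun i => (b i t)^2)
      (Finset.Icc_subset_Icc (le_refl 1) hdx) (fun i _ _ => sq_nonneg (b i t))
    rw [hb_norm t ht] at h
    exact h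
  have h1mem : (1:ℕ) ∈ Finset.Icc 1 d := Finset.mem_Icc.mpr ⟨le_rfl, hd⟩
  -- ## P bounds
  have hPabs : ∀ t, 0 ≤ t → |P t| ≤ σ 1 := by
    intro t ht
    rw [hP]
    calc |∑ j ∈ Finset.Icc 1 d, σ j * a j t * b j t|
        ≤ ∑ j ∈ Finset.Icc 1 d, |σ j * a j t * b j t| :=
          Finset.abs_sum_le_sum_abs _ _
      _ ≤ ∑ j ∈ Finset.Icc 1 d, σ 1 * (((a j t)^2 + (b j t)^2)/2) := by
          apply Finset.sum_le_sum
          intro j hj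
          obtain ⟨hj1, hj2⟩ := Finset.mem_Icc.mp hj
          have h0 : 0 ≤ σ j := hσnn j hj1 hj2
          have h1 : σ j ≤ σ 1 := hσle1 j hj1 hj2
          rw [abs_mul, abs_mul, abs_of_nonneg h0]
          have e1 := sq_abs (a j t)
          have e2 := sq_abs (b j t)
          nlinarith [sq_nonneg (|a j t| - |b j t|), abs_nonneg (a j t),
            abs_nonneg (b j t), mul_nonneg (abs_nonneg (a j t)) (abs_nonneg (b j t))]
      _ ≤ σ 1 := by
          rw [← Finset.mul_sum]
          have hsum : ∑ j ∈ Finset.Icc 1 d, (((a j t)^2 + (b j t)^2)/2) ≤ 1 := by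
            rw [← Finset.sum_div, Finset.sum_add_distrib]
            linarith [hsum_a t ht, hsum_b t ht]
          nlinarith [hσ1.le]
  have hP_ub : ∀ t, 0 ≤ t →
      P t ≤ σ 1 * (a 1 t * b 1 t) + σ 2 * (1 - a 1 t * b 1 t) := by
    intro t ht
    rw [hP, ← Finset.add_sum_erase _ _ h1mem]
    have key : ∑ j ∈ (Finset.Icc 1 d).erase 1, σ j * a j t * b j t
        ≤ σ 2 * (1 - a 1 t * b 1 t) := by
      have step1 : ∑ j ∈ (Finset.Icc 1 d).erase 1, σ j * a j t * b j t
          ≤ ∑ j ∈ (Finset.Icc 1 d).erase 1, σ 2 * (((a j t)^2 + (b j t)^2)/2) := by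
        apply Finset.sum_le_sum
        intro j hj
        obtain ⟨hjne, hjm⟩ := Finset.mem_erase.mp hj
        obtain ⟨hj1, hj2⟩ := Finset.mem_Icc.mp hjm
        have hj2' : 2 ≤ j := lt_of_le_of_ne hj1 (Ne.symm hjne)
        have h0 : 0 ≤ σ j := hσnn j hj1 hj2
        have h1 : σ j ≤ σ 2 := hσle2 j hj2' hj2
        nlinarith [sq_nonneg (a j t - b j t), sq_nonneg (a j t + b j t)]
      have step2 : ∑ j ∈ (Finset.Icc 1 d).erase 1, σ 2 * (((a j t)^2 + (b j t)^2)/2)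
          ≤ σ 2 * ((2 - (a 1 t)^2 - (b 1 t)^2)/2) := by
        rw [← Finset.mul_sum]
        apply mul_le_mul_of_nonneg_left _ hσ2nn
        rw [← Finset.sum_div, Finset.sum_add_distrib]
        have ea : ∑ j ∈ (Finset.Icc 1 d).erase 1, (a j t)^2 ≤ 1 - (a 1 t)^2 := by
          have := Finset.add_sum_erase _ (fun j => (a j t)^2) h1mem
          have h2 := hsum_a t ht
          linarith
        have eb : ∑ j ∈ (Finset.Icc 1 d).erase 1, (b j t)^2 ≤ 1 - (b 1 t)^2 := by
          have := Finset.add_sum_erase _ (fun j => (b j t)^2) h1mem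
          have h2 := hsum_b t ht
          linarith
        linarith
      have step3 : σ 2 * ((2 - (a 1 t)^2 - (b 1 t)^2)/2) ≤ σ 2 * (1 - a 1 t * b 1 t) := by
        apply mul_le_mul_of_nonneg_left _ hσ2nn
        nlinarith [sq_nonneg (a 1 t - b 1 t)]
      linarith
    linarith [key]
  -- ## upper bound for s
  have hs_ub : ∀ t, 0 ≤ t → s t ≤ s₀ := by
    have key := aux_nonneg (fun t => s₀ - s t)
      (fun t => -((N:ℝ) * s t ^ ((2:ℝ) - 2/(N:ℝ)) * (P t - s t)))
      (fun t ht => (hs' t ht).const_sub s₀)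
      (by simp only [sub_nonneg]; exact hs₀0)
      (by
        intro t ht hle
        simp only [sub_nonpos] at hle
        have hPle : P t ≤ σ 1 := (abs_le.mp (hPabs t ht)).2
        have h1 : P t - s t ≤ 0 := by linarith [le_trans hs₀σ hle]
        have h2 : 0 ≤ (N:ℝ) * s t ^ ((2:ℝ) - 2/(N:ℝ)) :=
          mul_nonneg hN0.le (Real.rpow_nonneg (hs_nonneg t ht) _)
        simpa using mul_nonpos_of_nonneg_of_nonpos h2 h1)
    intro t ht
    have := key t ht
    simp only [sub_nonneg] at this
    exact this
  -- ## derivative of g = a1*b1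
  have hg' : ∀ t, 0 ≤ t → HasDerivAt (fun τ => a 1 τ * b 1 τ)
      (s t ^ ((1:ℝ) - 2/(N:ℝ)) *
        (σ 1 * ((a 1 t)^2 + (b 1 t)^2) - 2 * (a 1 t * b 1 t) * P t)) t := by
    intro t ht
    have h := (ha' 1 le_rfl hd1y t ht).mul (hb' 1 le_rfl hd1x t ht)
    refine h.congr_deriv ?_
    ring
  -- ## the subsolution ℓ
  set e : ℝ := -((1:ℝ) - 2/(N:ℝ))⁻¹ with he_def
  have he_neg : e ≤ 0 := by
    rw [he_def]
    exact neg_nonpos.mpr (inv_nonneg.mpr hp.le)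
  have hE1 : ∀ t : ℝ, 0 ≤ t → (1:ℝ) ≤ 1 + B*((N:ℝ)-2)*t := by
    intro t ht
    nlinarith [mul_nonneg (mul_nonneg hBpos.le hN2pos.le) ht]
  have hEpos : ∀ t : ℝ, 0 ≤ t → (0:ℝ) < 1 + B*((N:ℝ)-2)*t := by
    intro t ht
    linarith [hE1 t ht]
  have hEderiv : ∀ t : ℝ, HasDerivAt (fun τ : ℝ => 1 + B*((N:ℝ)-2)*τ) (B*((N:ℝ)-2)) t := by
    intro t
    simpa using ((hasDerivAt_id t).const_mul (B*((N:ℝ)-2))).const_add 1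
  set ℓ : ℝ → ℝ := fun τ => s 0 * (1 + B*((N:ℝ)-2)*τ) ^ e with hℓ_def
  have hℓderiv : ∀ t, 0 ≤ t →
      HasDerivAt ℓ (-((N:ℝ)*(σ 1 + s₀)) * ℓ t ^ ((2:ℝ) - 2/(N:ℝ))) t := by
    intro t ht
    have hEt : (0:ℝ) < 1 + B*((N:ℝ)-2)*t := hEpos t ht
    have h := ((hEderiv t).rpow_const (p := e) (Or.inl (ne_of_gt hEt))).const_mul (s 0)
    refine h.congr_deriv (Eq.symm ?_)
    have hmul : ℓ t ^ ((2:ℝ) - 2/(N:ℝ)) =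
        s 0 ^ ((2:ℝ)-2/(N:ℝ)) * (1 + B*((N:ℝ)-2)*t) ^ (e * ((2:ℝ)-2/(N:ℝ))) := by
      rw [hℓ_def]
      simp only
      rw [Real.mul_rpow hs0.le (Real.rpow_nonneg hEt.le _), ← Real.rpow_mul hEt.le]
    have hexp_eq : e * ((2:ℝ) - 2/(N:ℝ)) = e - 1 := by
      rw [he_def]
      field_simp
      ring
    have hs0q : s 0 ^ ((2:ℝ)-2/(N:ℝ)) = s 0 * s 0 ^ ((1:ℝ)-2/(N:ℝ)) := by
      rw [show (2:ℝ) - 2/(N:ℝ) = 1 + (1 - 2/(N:ℝ)) by ring, Real.rpow_add hs0, Real.rpow_one]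
    have heN : e * ((N:ℝ) - 2) = -(N:ℝ) := by
      rw [he_def]
      field_simp
    rw [hmul, hexp_eq, hs0q]
    linear_combination (-(s 0) * e * (1 + B*((N:ℝ)-2)*t) ^ (e-1) * ((N:ℝ)-2)) * hB
      + (-(s 0 * s 0 ^ ((1:ℝ)-2/(N:ℝ)) * (1 + B*((N:ℝ)-2)*t) ^ (e-1) * (σ 1 + s₀))) * heN
  have hℓpos : ∀ t, 0 ≤ t → 0 < ℓ t := by
    intro t ht
    rw [hℓ_def]
    exact mul_pos hs0 (Real.rpow_pos_of_pos (hEpos t ht) _)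
  have hℓle : ∀ t, 0 ≤ t → ℓ t ≤ s 0 := by
    intro t ht
    rw [hℓ_def]
    simp only
    have h2 : (1 + B*((N:ℝ)-2)*t) ^ e ≤ 1 :=
      Real.rpow_le_one_of_one_le_of_nonpos (hE1 t ht) he_neg
    nlinarith [hs0.le]
  have hsl : ∀ t, 0 ≤ t → ℓ t ≤ s t := by
    have key := aux_nonneg (fun τ => s τ - ℓ τ)
      (fun τ => (N:ℝ) * s τ ^ ((2:ℝ) - 2/(N:ℝ)) * (P τ - s τ) -
        (-((N:ℝ)*(σ 1 + s₀)) * ℓ τ ^ ((2:ℝ) - 2/(N:ℝ))))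
      (fun τ hτ => (hs' τ hτ).sub (hℓderiv τ hτ))
      (by simp only [sub_nonneg]; exact hℓle 0 le_rfl)
      (by
        intro t ht hle
        simp only [sub_nonpos] at hle
        have hPge : -(σ 1) ≤ P t := (abs_le.mp (hPabs t ht)).1
        have hstle : s t ≤ s₀ := le_trans hle (le_trans (hℓle t ht) hs₀0)
        have hpow : s t ^ ((2:ℝ)-2/(N:ℝ)) ≤ ℓ t ^ ((2:ℝ)-2/(N:ℝ)) :=
          Real.rpow_le_rpow (hs_nonneg t ht) hle hq.le
        have h1 : (N:ℝ) * s t ^ ((2:ℝ)-2/(N:ℝ)) * (-(σ 1 + s₀)) ≤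
            (N:ℝ) * s t ^ ((2:ℝ)-2/(N:ℝ)) * (P t - s t) :=
          mul_le_mul_of_nonneg_left (by linarith)
            (mul_nonneg hN0.le (Real.rpow_nonneg (hs_nonneg t ht) _))
        have h2 : (N:ℝ)*(σ 1 + s₀) * s t ^ ((2:ℝ)-2/(N:ℝ)) ≤
            (N:ℝ)*(σ 1 + s₀) * ℓ t ^ ((2:ℝ)-2/(N:ℝ)) :=
          mul_le_mul_of_nonneg_left hpow (by positivity)
        nlinarith [h1, h2])
    intro t ht
    have := key t ht
    simp only [sub_nonneg] at this
    exact this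
  have hspos : ∀ t, 0 ≤ t → 0 < s t := fun t ht => lt_of_lt_of_le (hℓpos t ht) (hsl t ht)
  have hs_pow_lb : ∀ t, 0 ≤ t →
      s 0 ^ ((1:ℝ)-2/(N:ℝ)) / (1 + B*((N:ℝ)-2)*t) ≤ s t ^ ((1:ℝ)-2/(N:ℝ)) := by
    intro t ht
    have hEt := hEpos t ht
    have h1 : ℓ t ^ ((1:ℝ)-2/(N:ℝ)) ≤ s t ^ ((1:ℝ)-2/(N:ℝ)) :=
      Real.rpow_le_rpow (hℓpos t ht).le (hsl t ht) hp.le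
    have h2 : ℓ t ^ ((1:ℝ)-2/(N:ℝ)) = s 0 ^ ((1:ℝ)-2/(N:ℝ)) / (1 + B*((N:ℝ)-2)*t) := by
      rw [hℓ_def]
      simp only
      rw [Real.mul_rpow hs0.le (Real.rpow_nonneg hEt.le _), ← Real.rpow_mul hEt.le]
      rw [show e * ((1:ℝ)-2/(N:ℝ)) = -1 by rw [he_def]; field_simp]
      rw [Real.rpow_neg_one]
      ring
    rw [← h2]
    exact h1
  -- ## bounds on g
  have hg_le1 : ∀ t, 0 ≤ t → a 1 t * b 1 t ≤ 1 := by
    intro t ht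
    nlinarith [ha1sq t ht, hb1sq t ht, sq_nonneg (a 1 t - b 1 t)]
  set Y : ℝ := s₀ ^ ((1:ℝ)-2/(N:ℝ)) with hY_def
  have hYpos : 0 < Y := Real.rpow_pos_of_pos hs₀pos _
  have hXle : ∀ t, 0 ≤ t → s t ^ ((1:ℝ)-2/(N:ℝ)) ≤ Y := fun t ht =>
    Real.rpow_le_rpow (hs_nonneg t ht) (hs_ub t ht) hp.le
  have hg_nonneg : ∀ t, 0 ≤ t → 0 ≤ a 1 t * b 1 t := by
    have key := aux_nonneg (fun τ => Real.exp (-(4*σ 1*Y)*τ) * (a 1 τ * b 1 τ))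
      (fun τ => Real.exp (-(4*σ 1*Y)*τ) * (-(4*σ 1*Y)) * (a 1 τ * b 1 τ) +
        Real.exp (-(4*σ 1*Y)*τ) * (s τ ^ ((1:ℝ) - 2/(N:ℝ)) *
          (σ 1 * ((a 1 τ)^2 + (b 1 τ)^2) - 2 * (a 1 τ * b 1 τ) * P τ)))
      (by
        intro t ht
        have hexp : HasDerivAt (fun τ : ℝ => Real.exp (-(4*σ 1*Y)*τ))
            (Real.exp (-(4*σ 1*Y)*t) * (-(4*σ 1*Y))) t := by
          have h1 : HasDerivAt (fun τ : ℝ => -(4*σ 1*Y)*τ) (-(4*σ 1*Y)) t := by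
            simpa using (hasDerivAt_id t).const_mul (-(4*σ 1*Y))
          simpa using h1.exp
        exact hexp.mul (hg' t ht))
      (by
        exact mul_nonneg (Real.exp_pos _).le hab.le)
      (by
        intro t ht hle
        have hexp_pos := Real.exp_pos (-(4*σ 1*Y)*t)
        have hgle : a 1 t * b 1 t ≤ 0 := by nlinarith [hexp_pos, hle]
        have hXnn : 0 ≤ s t ^ ((1:ℝ)-2/(N:ℝ)) := Real.rpow_nonneg (hs_nonneg t ht) _
        have hXleY := hXle t ht
        have hPge : -(σ 1) ≤ P t := (abs_le.mp (hPabs t ht)).1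
        have h1 : 2*σ 1*(a 1 t * b 1 t) ≤ σ 1*((a 1 t)^2 + (b 1 t)^2) := by
          nlinarith [sq_nonneg (a 1 t - b 1 t), hσ1.le]
        have h2 : 2*σ 1*(a 1 t * b 1 t) ≤ -(2*(a 1 t * b 1 t)* P t) := by
          have := mul_nonneg (by linarith : (0:ℝ) ≤ -(2*(a 1 t * b 1 t)))
            (by linarith : (0:ℝ) ≤ P t + σ 1)
          nlinarith [this]
        have h3 : 4*σ 1*(a 1 t * b 1 t) ≤
            σ 1*((a 1 t)^2 + (b 1 t)^2) - 2*(a 1 t * b 1 t)*P t := by linarith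
        have h4 := mul_le_mul_of_nonneg_left h3 hXnn
        have hK'le : 4*σ 1*(a 1 t * b 1 t) ≤ 0 := by nlinarith [hgle, hσ1.le]
        have h5 := mul_le_mul_of_nonpos_right hXleY hK'le
        have hfin : 0 ≤ s t ^ ((1:ℝ)-2/(N:ℝ)) *
            (σ 1*((a 1 t)^2 + (b 1 t)^2) - 2*(a 1 t * b 1 t)*P t)
            - (4*σ 1*Y)*(a 1 t * b 1 t) := by nlinarith [h4, h5]
        nlinarith [mul_nonneg hexp_pos.le hfin])
    intro t ht
    have h := key t ht
    nlinarith [Real.exp_pos (-(4*σ 1*Y)*t), h]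
  -- ## the comparison function u and its derivative bound
  have hc₂B : c₂ * B = 2*(σ 1 - σ 2)*(s 0 ^ ((1:ℝ)-2/(N:ℝ))) := by
    rw [hc₂, hB]
    have hden : σ 1 + s₀ ≠ 0 := by positivity
    field_simp
  have hu' : ∀ t, 0 ≤ t → HasDerivAt (fun τ => (1 + B*((N:ℝ)-2)*τ) ^ (c₂/((N:ℝ)-2)))
      ((c₂/((N:ℝ)-2)) * (1 + B*((N:ℝ)-2)*t) ^ (c₂/((N:ℝ)-2) - 1) * (B*((N:ℝ)-2))) t := by
    intro t ht
    have h := (hEderiv t).rpow_const (p := c₂/((N:ℝ)-2)) (Or.inl (ne_of_gt (hEpos t ht)))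
    convert h using 1
    ring
  have hu_pos : ∀ t : ℝ, 0 ≤ t → (0:ℝ) < (1 + B*((N:ℝ)-2)*t) ^ (c₂/((N:ℝ)-2)) :=
    fun t ht => Real.rpow_pos_of_pos (hEpos t ht) _
  have hu'_le : ∀ t, 0 ≤ t →
      (c₂/((N:ℝ)-2)) * (1 + B*((N:ℝ)-2)*t) ^ (c₂/((N:ℝ)-2) - 1) * (B*((N:ℝ)-2)) ≤
      2*(σ 1 - σ 2) * s t ^ ((1:ℝ)-2/(N:ℝ)) * (1 + B*((N:ℝ)-2)*t) ^ (c₂/((N:ℝ)-2)) := by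
    intro t ht
    have hEt := hEpos t ht
    have hsplit : (1 + B*((N:ℝ)-2)*t) ^ (c₂/((N:ℝ)-2) - 1)
        = (1 + B*((N:ℝ)-2)*t) ^ (c₂/((N:ℝ)-2)) / (1 + B*((N:ℝ)-2)*t) := by
      rw [Real.rpow_sub hEt, Real.rpow_one]
    rw [hsplit]
    have hLHS : (c₂/((N:ℝ)-2)) *
        ((1 + B*((N:ℝ)-2)*t) ^ (c₂/((N:ℝ)-2)) / (1 + B*((N:ℝ)-2)*t)) * (B*((N:ℝ)-2))
        = (2*(σ 1 - σ 2)) * (s 0 ^ ((1:ℝ)-2/(N:ℝ)) / (1 + B*((N:ℝ)-2)*t)) *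
          (1 + B*((N:ℝ)-2)*t) ^ (c₂/((N:ℝ)-2)) := by
      exact aux_ratio c₂ B _ _ _ _ _ (ne_of_gt hEt) hN2ne hc₂B
    rw [hLHS]
    apply mul_le_mul_of_nonneg_right _ (hu_pos t ht).le
    exact mul_le_mul_of_nonneg_left (hs_pow_lb t ht) (by linarith)
  -- ## the Gronwall comparison: F := (1-g) A u - g ≤ 0
  have hF_le : ∀ t, 0 ≤ t →
      (1 - a 1 t * b 1 t) * A * ((1 + B*((N:ℝ)-2)*t) ^ (c₂/((N:ℝ)-2))) - a 1 t * b 1 t ≤ 0 := by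
    have key := aux_nonpos
      (fun τ => Real.exp (-(2*(σ 1 - σ 2)*Y)*τ) *
        ((1 - a 1 τ * b 1 τ) * A * ((1 + B*((N:ℝ)-2)*τ) ^ (c₂/((N:ℝ)-2))) - a 1 τ * b 1 τ))
      (fun τ => Real.exp (-(2*(σ 1 - σ 2)*Y)*τ) * (-(2*(σ 1 - σ 2)*Y)) *
        ((1 - a 1 τ * b 1 τ) * A * ((1 + B*((N:ℝ)-2)*τ) ^ (c₂/((N:ℝ)-2))) - a 1 τ * b 1 τ)
        + Real.exp (-(2*(σ 1 - σ 2)*Y)*τ) *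
          ((-(s τ ^ ((1:ℝ) - 2/(N:ℝ)) *
              (σ 1 * ((a 1 τ)^2 + (b 1 τ)^2) - 2 * (a 1 τ * b 1 τ) * P τ)) * A) *
             ((1 + B*((N:ℝ)-2)*τ) ^ (c₂/((N:ℝ)-2)))
           + ((1 - a 1 τ * b 1 τ) * A) *
             ((c₂/((N:ℝ)-2)) * (1 + B*((N:ℝ)-2)*τ) ^ (c₂/((N:ℝ)-2) - 1) * (B*((N:ℝ)-2)))
           - s τ ^ ((1:ℝ) - 2/(N:ℝ)) *
              (σ 1 * ((a 1 τ)^2 + (b 1 τ)^2) - 2 * (a 1 τ * b 1 τ) * P τ)))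
      (by
        intro t ht
        have hexp : HasDerivAt (fun τ : ℝ => Real.exp (-(2*(σ 1 - σ 2)*Y)*τ))
            (Real.exp (-(2*(σ 1 - σ 2)*Y)*t) * (-(2*(σ 1 - σ 2)*Y))) t := by
          have h1 : HasDerivAt (fun τ : ℝ => -(2*(σ 1 - σ 2)*Y)*τ) (-(2*(σ 1 - σ 2)*Y)) t := by
            simpa using (hasDerivAt_id t).const_mul (-(2*(σ 1 - σ 2)*Y))
          simpa using h1.exp
        have hF : HasDerivAt
            (fun τ => (1 - a 1 τ * b 1 τ) * A * ((1 + B*((N:ℝ)-2)*τ) ^ (c₂/((N:ℝ)-2)))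
              - a 1 τ * b 1 τ)
            ((-(s t ^ ((1:ℝ) - 2/(N:ℝ)) *
                (σ 1 * ((a 1 t)^2 + (b 1 t)^2) - 2 * (a 1 t * b 1 t) * P t)) * A) *
              ((1 + B*((N:ℝ)-2)*t) ^ (c₂/((N:ℝ)-2)))
             + ((1 - a 1 t * b 1 t) * A) *
              ((c₂/((N:ℝ)-2)) * (1 + B*((N:ℝ)-2)*t) ^ (c₂/((N:ℝ)-2) - 1) * (B*((N:ℝ)-2)))
             - s t ^ ((1:ℝ) - 2/(N:ℝ)) *
                (σ 1 * ((a 1 t)^2 + (b 1 t)^2) - 2 * (a 1 t * b 1 t) * P t)) t := by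
          have h1 := (((hg' t ht).const_sub 1).mul_const A).mul (hu' t ht)
          have h2 := h1.sub (hg' t ht)
          refine h2.congr_deriv (Eq.symm ?_)
          try ring
        exact hexp.mul hF)
      (by
        have hu0 : ((1:ℝ) + B*((N:ℝ)-2)*0) ^ (c₂/((N:ℝ)-2)) = 1 := by
          rw [show (1:ℝ) + B*((N:ℝ)-2)*0 = 1 by ring, Real.one_rpow]
        have hAeq : (1 - a 1 0 * b 1 0) * A = a 1 0 * b 1 0 := by
          have h1g : (1:ℝ) - a 1 0 * b 1 0 ≠ 0 :=
            ne_of_gt (by linarith : (0:ℝ) < 1 - a 1 0 * b 1 0)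
          rw [hA, mul_comm (1 - a 1 0 * b 1 0), div_mul_cancel₀ _ h1g]
        rw [hu0, mul_one, hAeq, sub_self, mul_zero])
      (by
        intro t ht hge
        have hexp_pos := Real.exp_pos (-(2*(σ 1 - σ 2)*Y)*t)
        have hFge : 0 ≤ (1 - a 1 t * b 1 t) * A *
            ((1 + B*((N:ℝ)-2)*t) ^ (c₂/((N:ℝ)-2))) - a 1 t * b 1 t := by
          nlinarith [hexp_pos, hge]
        have hg0 := hg_nonneg t ht
        have hg1 := hg_le1 t ht
        have hXnn : 0 ≤ s t ^ ((1:ℝ)-2/(N:ℝ)) := Real.rpow_nonneg (hs_nonneg t ht) _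
        have hXleY := hXle t ht
        have hupos := hu_pos t ht
        have hule := hu'_le t ht
        -- derivative of g is at least 2(σ1-σ2) X g (1-g)
        have h1 : 2*σ 1*(a 1 t * b 1 t) ≤ σ 1*((a 1 t)^2 + (b 1 t)^2) := by
          nlinarith [sq_nonneg (a 1 t - b 1 t), hσ1.le]
        have h2 : 2*(a 1 t * b 1 t)*P t ≤ 2*(a 1 t * b 1 t)*
            (σ 1 * (a 1 t * b 1 t) + σ 2 * (1 - a 1 t * b 1 t)) :=
          mul_le_mul_of_nonneg_left (hP_ub t ht) (by linarith)
        have hinner : 2*(σ 1 - σ 2)*((a 1 t * b 1 t)*(1 - a 1 t * b 1 t)) ≤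
            σ 1*((a 1 t)^2 + (b 1 t)^2) - 2*(a 1 t * b 1 t)*P t := by nlinarith [h1, h2]
        have hgd := mul_le_mul_of_nonneg_left hinner hXnn
        -- assemble : F' ≤ 2(σ1-σ2) X (1-g) F ≤ 2(σ1-σ2) Y F
        have hAupos : (0:ℝ) < A * ((1 + B*((N:ℝ)-2)*t) ^ (c₂/((N:ℝ)-2))) + 1 := by
          nlinarith [mul_pos hApos hupos]
        have step1 := mul_le_mul_of_nonneg_right (neg_le_neg hgd) hAupos.le
        have step2 := mul_le_mul_of_nonneg_left hule
          (mul_nonneg (by linarith : (0:ℝ) ≤ 1 - a 1 t * b 1 t) hApos.le)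
        have hX1g : s t ^ ((1:ℝ)-2/(N:ℝ)) * (1 - a 1 t * b 1 t) ≤ Y := by
          nlinarith [mul_nonneg hXnn hg0, hXleY]
        have step4 : 2*(σ 1 - σ 2)*(s t ^ ((1:ℝ)-2/(N:ℝ)) * (1 - a 1 t * b 1 t)) *
            ((1 - a 1 t * b 1 t) * A * ((1 + B*((N:ℝ)-2)*t) ^ (c₂/((N:ℝ)-2))) - a 1 t * b 1 t)
            ≤ 2*(σ 1 - σ 2)*Y *
            ((1 - a 1 t * b 1 t) * A * ((1 + B*((N:ℝ)-2)*t) ^ (c₂/((N:ℝ)-2))) - a 1 t * b 1 t) :=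
          mul_le_mul_of_nonneg_right
            (mul_le_mul_of_nonneg_left hX1g (by linarith)) hFge
        have hFd : (-(s t ^ ((1:ℝ) - 2/(N:ℝ)) *
              (σ 1 * ((a 1 t)^2 + (b 1 t)^2) - 2 * (a 1 t * b 1 t) * P t)) * A) *
              ((1 + B*((N:ℝ)-2)*t) ^ (c₂/((N:ℝ)-2)))
             + ((1 - a 1 t * b 1 t) * A) *
              ((c₂/((N:ℝ)-2)) * (1 + B*((N:ℝ)-2)*t) ^ (c₂/((N:ℝ)-2) - 1) * (B*((N:ℝ)-2)))
             - s t ^ ((1:ℝ) - 2/(N:ℝ)) *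
              (σ 1 * ((a 1 t)^2 + (b 1 t)^2) - 2 * (a 1 t * b 1 t) * P t)
            ≤ 2*(σ 1 - σ 2)*Y *
            ((1 - a 1 t * b 1 t) * A * ((1 + B*((N:ℝ)-2)*t) ^ (c₂/((N:ℝ)-2))) - a 1 t * b 1 t) := by
          nlinarith [step1, step2, step4]
        nlinarith [mul_le_mul_of_nonneg_left hFd hexp_pos.le])
    intro t ht
    have h := key t ht
    nlinarith [Real.exp_pos (-(2*(σ 1 - σ 2)*Y)*t), h]
  -- ## conclusion
  intro t ht
  have hF := hF_le t ht
  have hupos := hu_pos t ht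
  have hden : (0:ℝ) < A * (1 + B*((N:ℝ)-2)*t) ^ (c₂/((N:ℝ)-2)) + 1 := by
    nlinarith [mul_pos hApos hupos]
  have h2 : 1 - a 1 t * b 1 t ≤ 1 / (A * (1 + B*((N:ℝ)-2)*t) ^ (c₂/((N:ℝ)-2)) + 1) := by
    rw [le_div_iff₀ hden]
    nlinarith [hF]
  linarith [h2]
end

section
/- Suppose the reduced gradient-flow system holds with N ≥ 3, s(0) > 0, 0 < a_1(0)·b_1(0) < 1, P(t) < s(t) for every t ≥ 0, and s(t) → s_1 as t → ∞. Set A := a_1(0)b_1(0)/(1 − a_1(0)b_1(0)), c₃ := 2·s_1^{1−2/N}·(s_1 − s_2), and c₄ := N·s_1^{2−2/N} (with s_2 := 0 if d = 1). Then for every t ≥ 0: s_1 ≤ s(t) ≤ s_1 + (s(0) − s_1)·e^{−c₄·t}, and 1 − a_1(t)·b_1(t) ≤ (1 + A·e^{c₃·t})^{−1}. -/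
open Filter Topology

private lemma cs_aux (t : Finset ℕ) (f g : ℕ → ℝ) (A B : ℝ) (hA : 0 ≤ A) (hB : 0 ≤ B)
    (hf : ∑ i ∈ t, f i ^ 2 ≤ A ^ 2) (hg : ∑ i ∈ t, g i ^ 2 ≤ B ^ 2) :
    ∑ i ∈ t, f i * g i ≤ A * B := by
  have h1 : ∑ i ∈ t, f i * g i ≤ ∑ i ∈ t, |f i| * |g i| :=
    Finset.sum_le_sum fun i _ => (le_abs_self _).trans (le_of_eq (abs_mul _ _))
  have h2 := Finset.sum_mul_sq_le_sq_mul_sq t (fun i => |f i|) (fun i => |g i|)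
  simp only [sq_abs] at h2
  have hf0 : 0 ≤ ∑ i ∈ t, f i ^ 2 := Finset.sum_nonneg fun i _ => sq_nonneg _
  have hg0 : 0 ≤ ∑ i ∈ t, g i ^ 2 := Finset.sum_nonneg fun i _ => sq_nonneg _
  have h3 : (∑ i ∈ t, |f i| * |g i|) ^ 2 ≤ (A * B) ^ 2 := by
    calc (∑ i ∈ t, |f i| * |g i|) ^ 2 ≤ (∑ i ∈ t, f i ^ 2) * (∑ i ∈ t, g i ^ 2) := h2
    _ ≤ (A * B) ^ 2 := by nlinarith
  have h4 : 0 ≤ ∑ i ∈ t, |f i| * |g i| :=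
    Finset.sum_nonneg fun i _ => mul_nonneg (abs_nonneg _) (abs_nonneg _)
  nlinarith [mul_nonneg hA hB]

set_option maxHeartbeats 1000000 in
theorem stmt15
    (N d dy dx : ℕ) (hN : 2 ≤ N) (hd : 1 ≤ d) (hdy : d ≤ dy) (hdx : d ≤ dx)
    (σ : ℕ → ℝ)
    (hσpos : ∀ i, 1 ≤ i → i ≤ d → 0 < σ i)
    (hσmono : ∀ i j, 1 ≤ i → i < j → j ≤ d → σ j < σ i)
    (hσzero : ∀ i, d < i → σ i = 0)
    (s : ℝ → ℝ) (a b : ℕ → ℝ → ℝ) (P : ℝ → ℝ)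
    (hs_nonneg : ∀ t, 0 ≤ t → 0 ≤ s t)
    (ha_norm : ∀ t, 0 ≤ t → ∑ i ∈ Finset.Icc 1 dy, (a i t) ^ 2 = 1)
    (hb_norm : ∀ t, 0 ≤ t → ∑ j ∈ Finset.Icc 1 dx, (b j t) ^ 2 = 1)
    (hP : ∀ t, P t = ∑ j ∈ Finset.Icc 1 d, σ j * a j t * b j t)
    (hs' : ∀ t, 0 ≤ t →
      HasDerivAt s ((N : ℝ) * s t ^ ((2 : ℝ) - 2 / (N : ℝ)) * (P t - s t)) t)
    (ha' : ∀ i, 1 ≤ i → i ≤ dy → ∀ t, 0 ≤ t →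
      HasDerivAt (a i) (s t ^ ((1 : ℝ) - 2 / (N : ℝ)) * (σ i * b i t - a i t * P t)) t)
    (hb' : ∀ j, 1 ≤ j → j ≤ dx → ∀ t, 0 ≤ t →
      HasDerivAt (b j) (s t ^ ((1 : ℝ) - 2 / (N : ℝ)) * (σ j * a j t - b j t * P t)) t)
    (hN3 : 3 ≤ N) (hs0 : 0 < s 0)
    (hab : 0 < a 1 0 * b 1 0) (hab1 : a 1 0 * b 1 0 < 1)
    (hPlt : ∀ t, 0 ≤ t → P t < s t)
    (hconv : Tendsto s atTop (nhds (σ 1)))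
    (A c₃ c₄ : ℝ)
    (hA : A = a 1 0 * b 1 0 / (1 - a 1 0 * b 1 0))
    (hc₃ : c₃ = 2 * σ 1 ^ ((1 : ℝ) - 2 / (N : ℝ)) * (σ 1 - σ 2))
    (hc₄ : c₄ = (N : ℝ) * σ 1 ^ ((2 : ℝ) - 2 / (N : ℝ))) :
    ∀ t, 0 ≤ t →
      σ 1 ≤ s t ∧ s t ≤ σ 1 + (s 0 - σ 1) * Real.exp (-(c₄ * t)) ∧
      1 - a 1 t * b 1 t ≤ (1 + A * Real.exp (c₃ * t))⁻¹ := by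
  have hN3' : (3:ℝ) ≤ (N:ℝ) := by exact_mod_cast hN3
  have hp1 : (0:ℝ) < 1 - 2/(N:ℝ) := by
    have h1 : (2:ℝ)/(N:ℝ) ≤ 2/3 := by
      apply div_le_div_of_nonneg_left (by norm_num) (by norm_num) hN3'
    linarith
  have hp2 : (0:ℝ) ≤ 2 - 2/(N:ℝ) := by linarith
  have hσ1 : 0 < σ 1 := hσpos 1 le_rfl hd
  have hσ2nonneg : 0 ≤ σ 2 := by
    rcases Nat.lt_or_ge d 2 with h | h
    · exact le_of_eq (hσzero 2 h).symm
    · exact (hσpos 2 (by norm_num) h).le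
  have hσ21 : σ 2 < σ 1 := by
    rcases Nat.lt_or_ge d 2 with h | h
    · rw [hσzero 2 h]; exact hσ1
    · exact hσmono 1 2 le_rfl (by norm_num) h
  have h1dy : (1:ℕ) ∈ Finset.Icc 1 dy := Finset.mem_Icc.2 ⟨le_rfl, hd.trans hdy⟩
  have h1dx : (1:ℕ) ∈ Finset.Icc 1 dx := Finset.mem_Icc.2 ⟨le_rfl, hd.trans hdx⟩
  have ha1sq : ∀ t, 0 ≤ t → (a 1 t)^2 ≤ 1 := by
    intro t ht
    rw [← ha_norm t ht]
    exact Finset.single_le_sum (f := fun i => (a i t)^2) (fun i _ => sq_nonneg _) h1dy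
  have hb1sq : ∀ t, 0 ≤ t → (b 1 t)^2 ≤ 1 := by
    intro t ht
    rw [← hb_norm t ht]
    exact Finset.single_le_sum (f := fun i => (b i t)^2) (fun i _ => sq_nonneg _) h1dx
  have hsuma : ∀ t, 0 ≤ t → ∑ i ∈ Finset.Icc 1 d, (a i t)^2 ≤ 1 := by
    intro t ht
    rw [← ha_norm t ht]
    exact Finset.sum_le_sum_of_subset_of_nonneg (Finset.Icc_subset_Icc_right hdy)
      (fun i _ _ => sq_nonneg _)
  have hsumb : ∀ t, 0 ≤ t → ∑ i ∈ Finset.Icc 1 dx, (b i t)^2 ≤ 1 := by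
    intro t ht; rw [hb_norm t ht]
  have hsumb1 : ∀ t, 0 ≤ t → ∑ i ∈ Finset.Icc 1 d, (b i t)^2 ≤ 1 := by
    intro t ht
    rw [← hb_norm t ht]
    exact Finset.sum_le_sum_of_subset_of_nonneg (Finset.Icc_subset_Icc_right hdx)
      (fun i _ _ => sq_nonneg _)
  have hIoc2 : ∀ m : ℕ, Finset.Ioc 1 m = Finset.Icc 2 m := by
    intro m; ext i; simp [Finset.mem_Icc, Finset.mem_Ioc, Nat.lt_iff_add_one_le]
  have hsuma2 : ∀ t, 0 ≤ t → ∑ i ∈ Finset.Icc 2 d, (a i t)^2 ≤ 1 - (a 1 t)^2 := by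
    intro t ht
    have hsub : ∑ i ∈ Finset.Icc 2 dy, (a i t)^2 = 1 - (a 1 t)^2 := by
      have hone := ha_norm t ht
      rw [Finset.Icc_eq_cons_Ioc (hd.trans hdy), Finset.sum_cons, hIoc2] at hone
      linarith
    rw [← hsub]
    exact Finset.sum_le_sum_of_subset_of_nonneg (Finset.Icc_subset_Icc_right hdy)
      (fun i _ _ => sq_nonneg _)
  have hsumb2 : ∀ t, 0 ≤ t → ∑ i ∈ Finset.Icc 2 d, (b i t)^2 ≤ 1 - (b 1 t)^2 := by
    intro t ht
    have hsub : ∑ i ∈ Finset.Icc 2 dx, (b i t)^2 = 1 - (b 1 t)^2 := by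
      have hone := hb_norm t ht
      rw [Finset.Icc_eq_cons_Ioc (hd.trans hdx), Finset.sum_cons, hIoc2] at hone
      linarith
    rw [← hsub]
    exact Finset.sum_le_sum_of_subset_of_nonneg (Finset.Icc_subset_Icc_right hdx)
      (fun i _ _ => sq_nonneg _)
  -- P ≤ σ 1
  have hP_le : ∀ t, 0 ≤ t → P t ≤ σ 1 := by
    intro t ht
    rw [hP]
    have h1 : ∑ j ∈ Finset.Icc 1 d, (σ j * a j t)^2 ≤ (σ 1)^2 := by
      have hterm : ∀ j ∈ Finset.Icc 1 d, (σ j * a j t)^2 ≤ (σ 1)^2 * (a j t)^2 := by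
        intro j hj
        obtain ⟨hj1, hj2⟩ := Finset.mem_Icc.1 hj
        have h0 : 0 < σ j := hσpos j hj1 hj2
        have hle : σ j ≤ σ 1 := by
          rcases hj1.lt_or_eq with h | h
          · exact (hσmono 1 j le_rfl h hj2).le
          · rw [← h]
        have hsq : σ j ^ 2 ≤ σ 1 ^ 2 := by nlinarith
        rw [mul_pow]
        nlinarith [mul_nonneg (sub_nonneg.2 hsq) (sq_nonneg (a j t))]
      calc ∑ j ∈ Finset.Icc 1 d, (σ j * a j t)^2
          ≤ ∑ j ∈ Finset.Icc 1 d, (σ 1)^2 * (a j t)^2 := Finset.sum_le_sum hterm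
        _ = (σ 1)^2 * ∑ j ∈ Finset.Icc 1 d, (a j t)^2 := by rw [Finset.mul_sum]
        _ ≤ (σ 1)^2 * 1 := mul_le_mul_of_nonneg_left (hsuma t ht) (sq_nonneg _)
        _ = (σ 1)^2 := mul_one _
    have h2 : ∑ j ∈ Finset.Icc 1 d, (b j t)^2 ≤ (1:ℝ)^2 := by simpa using hsumb1 t ht
    simpa using cs_aux (Finset.Icc 1 d) (fun j => σ j * a j t) (fun j => b j t)
      (σ 1) 1 hσ1.le zero_le_one h1 h2
  -- P ≤ σ1 x + σ2 (1-x)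
  have hP_le2 : ∀ t, 0 ≤ t → P t ≤ σ 1 * (a 1 t * b 1 t) + σ 2 * (1 - a 1 t * b 1 t) := by
    intro t ht
    rw [hP, Finset.Icc_eq_cons_Ioc hd, Finset.sum_cons, hIoc2]
    have htail : ∑ j ∈ Finset.Icc 2 d, σ j * a j t * b j t ≤ σ 2 * (1 - a 1 t * b 1 t) := by
      set Aq := Real.sqrt (1 - (a 1 t)^2) with hAq
      set Bq := Real.sqrt (1 - (b 1 t)^2) with hBq
      have hA2 : Aq^2 = 1 - (a 1 t)^2 := Real.sq_sqrt (by linarith [ha1sq t ht])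
      have hB2 : Bq^2 = 1 - (b 1 t)^2 := Real.sq_sqrt (by linarith [hb1sq t ht])
      have hABle : Aq * Bq ≤ 1 - a 1 t * b 1 t := by
        have h1 : (Aq*Bq)^2 ≤ (1 - a 1 t * b 1 t)^2 := by
          rw [mul_pow, hA2, hB2]
          nlinarith [sq_nonneg (a 1 t - b 1 t), ha1sq t ht, hb1sq t ht]
        have h2 : 0 ≤ Aq*Bq := mul_nonneg (Real.sqrt_nonneg _) (Real.sqrt_nonneg _)
        have h3 : 0 ≤ 1 - a 1 t * b 1 t := by
          nlinarith [sq_nonneg (a 1 t - b 1 t), ha1sq t ht, hb1sq t ht]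
        nlinarith
      have hf : ∑ j ∈ Finset.Icc 2 d, (σ j * a j t)^2 ≤ (σ 2 * Aq)^2 := by
        have hterm : ∀ j ∈ Finset.Icc 2 d, (σ j * a j t)^2 ≤ (σ 2)^2 * (a j t)^2 := by
          intro j hj
          obtain ⟨hj1, hj2⟩ := Finset.mem_Icc.1 hj
          have h0 : 0 < σ j := hσpos j (by omega) hj2
          have hle : σ j ≤ σ 2 := by
            rcases hj1.lt_or_eq with h | h
            · exact (hσmono 2 j one_le_two h hj2).le
            · rw [← h]
          have hsq : σ j ^ 2 ≤ σ 2 ^ 2 := by nlinarith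
          rw [mul_pow]
          nlinarith [mul_nonneg (sub_nonneg.2 hsq) (sq_nonneg (a j t))]
        calc ∑ j ∈ Finset.Icc 2 d, (σ j * a j t)^2
            ≤ ∑ j ∈ Finset.Icc 2 d, (σ 2)^2 * (a j t)^2 := Finset.sum_le_sum hterm
          _ = (σ 2)^2 * ∑ j ∈ Finset.Icc 2 d, (a j t)^2 := by rw [Finset.mul_sum]
          _ ≤ (σ 2)^2 * Aq^2 := by
              rw [hA2]; exact mul_le_mul_of_nonneg_left (hsuma2 t ht) (sq_nonneg _)
          _ = (σ 2 * Aq)^2 := (mul_pow _ _ _).symm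
      have hg : ∑ j ∈ Finset.Icc 2 d, (b j t)^2 ≤ Bq^2 := by
        rw [hB2]; exact hsumb2 t ht
      have hcs := cs_aux (Finset.Icc 2 d) (fun j => σ j * a j t) (fun j => b j t)
        (σ 2 * Aq) Bq (mul_nonneg hσ2nonneg (Real.sqrt_nonneg _)) (Real.sqrt_nonneg _) hf hg
      calc ∑ j ∈ Finset.Icc 2 d, σ j * a j t * b j t ≤ σ 2 * Aq * Bq := hcs
        _ = σ 2 * (Aq*Bq) := by ring
        _ ≤ σ 2 * (1 - a 1 t * b 1 t) := mul_le_mul_of_nonneg_left hABle hσ2nonneg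
    linarith
  -- s is antitone, bounded below by σ 1
  have hs_cont : ContinuousOn s (Set.Ici 0) :=
    fun t ht => ((hs' t ht).continuousAt).continuousWithinAt
  have hs_anti : AntitoneOn s (Set.Ici 0) := by
    apply antitoneOn_of_deriv_nonpos (convex_Ici 0) hs_cont
    · intro t ht
      rw [interior_Ici] at ht
      exact ((hs' t ht.le).differentiableAt).differentiableWithinAt
    · intro t ht
      rw [interior_Ici] at ht
      rw [(hs' t ht.le).deriv]
      have h1 : 0 ≤ (N:ℝ) * s t ^ ((2:ℝ) - 2/(N:ℝ)) :=
        mul_nonneg (Nat.cast_nonneg _) (Real.rpow_nonneg (hs_nonneg t ht.le) _)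
      have h2 : P t - s t ≤ 0 := by linarith [hPlt t ht.le]
      exact mul_nonpos_iff.2 (Or.inl ⟨h1, h2⟩)
  have hs_lb : ∀ t, 0 ≤ t → σ 1 ≤ s t := by
    intro t ht
    apply le_of_tendsto hconv
    filter_upwards [eventually_ge_atTop t] with u hu
    exact hs_anti (Set.mem_Ici.2 ht) (Set.mem_Ici.2 (ht.trans hu)) hu
  have hs_pos : ∀ t, 0 ≤ t → 0 < s t := fun t ht => hσ1.trans_le (hs_lb t ht)
  -- claim 2
  have claim2 : ∀ t, 0 ≤ t → s t ≤ σ 1 + (s 0 - σ 1) * Real.exp (-(c₄ * t)) := by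
    intro t ht
    set g : ℝ → ℝ := fun u => (s u - σ 1) * Real.exp (c₄ * u) with hg
    have hgd : ∀ u, 0 ≤ u → HasDerivAt g
        (((N:ℝ) * s u ^ ((2:ℝ) - 2/(N:ℝ)) * (P u - s u) + c₄ * (s u - σ 1)) * Real.exp (c₄*u)) u := by
      intro u hu
      have h1 : HasDerivAt (fun v => s v - σ 1) ((N:ℝ) * s u ^ ((2:ℝ) - 2/(N:ℝ)) * (P u - s u)) u :=
        (hs' u hu).sub_const _
      have h2 : HasDerivAt (fun v => Real.exp (c₄ * v)) (Real.exp (c₄*u) * (c₄ * 1)) u :=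
        ((hasDerivAt_id u).const_mul c₄).exp
      have := h1.mul h2
      refine this.congr_deriv ?_
      ring
    have hganti : AntitoneOn g (Set.Ici 0) := by
      apply antitoneOn_of_deriv_nonpos (convex_Ici 0)
      · exact fun u hu => ((hgd u hu).continuousAt).continuousWithinAt
      · intro u hu; rw [interior_Ici] at hu
        exact ((hgd u hu.le).differentiableAt).differentiableWithinAt
      · intro u hu; rw [interior_Ici] at hu
        rw [(hgd u hu.le).deriv]
        have he : 0 < Real.exp (c₄*u) := Real.exp_pos _
        have hkey : (N:ℝ) * s u ^ ((2:ℝ) - 2/(N:ℝ)) * (P u - s u) + c₄ * (s u - σ 1) ≤ 0 := by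
          rw [hc₄]
          have hN0 : (0:ℝ) ≤ N := Nat.cast_nonneg N
          have hss := hs_lb u hu.le
          have hPσ := hP_le u hu.le
          have hpow : σ 1 ^ ((2:ℝ) - 2/(N:ℝ)) ≤ s u ^ ((2:ℝ) - 2/(N:ℝ)) :=
            Real.rpow_le_rpow hσ1.le hss hp2
          have hsp0 : 0 ≤ s u ^ ((2:ℝ) - 2/(N:ℝ)) := Real.rpow_nonneg (hs_nonneg u hu.le) _
          nlinarith [mul_nonneg (mul_nonneg hN0 hsp0) (sub_nonneg.2 hPσ),
            mul_nonneg (mul_nonneg hN0 (sub_nonneg.2 hpow)) (sub_nonneg.2 hss)]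
        exact mul_nonpos_iff.2 (Or.inr ⟨hkey, he.le⟩)
    have hgle : (s t - σ 1) * Real.exp (c₄ * t) ≤ s 0 - σ 1 := by
      have := hganti (Set.mem_Ici.2 le_rfl) (Set.mem_Ici.2 ht) ht
      simpa [hg] using this
    have hE : Real.exp (c₄*t) * Real.exp (-(c₄*t)) = 1 := by
      rw [← Real.exp_add]; simp
    have h5 : (s t - σ 1) * Real.exp (c₄*t) * Real.exp (-(c₄*t)) = s t - σ 1 := by
      rw [mul_assoc, hE, mul_one]
    have h6 := mul_le_mul_of_nonneg_right hgle (Real.exp_pos (-(c₄*t))).le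
    rw [h5] at h6
    linarith
  -- x := a1 b1 facts
  have hx' : ∀ t, 0 ≤ t → HasDerivAt (fun u => a 1 u * b 1 u)
      (s t ^ ((1:ℝ) - 2/(N:ℝ)) *
        (σ 1 * ((a 1 t)^2 + (b 1 t)^2) - 2 * (a 1 t * b 1 t) * P t)) t := by
    intro t ht
    have h := (ha' 1 le_rfl (hd.trans hdy) t ht).mul (hb' 1 le_rfl (hd.trans hdx) t ht)
    refine h.congr_deriv ?_
    ring
  have hx_le1 : ∀ t, 0 ≤ t → a 1 t * b 1 t ≤ 1 := by
    intro t ht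
    nlinarith [ha1sq t ht, hb1sq t ht, sq_nonneg (a 1 t - b 1 t)]
  have hxd_ge : ∀ t, 0 ≤ t → 0 ≤ a 1 t * b 1 t →
      c₃ * (a 1 t * b 1 t) * (1 - a 1 t * b 1 t) ≤
      s t ^ ((1:ℝ) - 2/(N:ℝ)) * (σ 1 * ((a 1 t)^2 + (b 1 t)^2) - 2 * (a 1 t * b 1 t) * P t) := by
    intro t ht hx0
    have hx1 : a 1 t * b 1 t ≤ 1 := hx_le1 t ht
    have hpow : σ 1 ^ ((1:ℝ)-2/(N:ℝ)) ≤ s t ^ ((1:ℝ)-2/(N:ℝ)) :=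
      Real.rpow_le_rpow hσ1.le (hs_lb t ht) hp1.le
    have hpowpos : 0 < σ 1 ^ ((1:ℝ)-2/(N:ℝ)) := Real.rpow_pos_of_pos hσ1 _
    have hsp0 : 0 ≤ s t ^ ((1:ℝ)-2/(N:ℝ)) := (hpowpos.trans_le hpow).le
    have hPb := hP_le2 t ht
    have hinner : 2 * (a 1 t * b 1 t) * (1 - a 1 t * b 1 t) * (σ 1 - σ 2) ≤
        σ 1 * ((a 1 t)^2 + (b 1 t)^2) - 2 * (a 1 t * b 1 t) * P t := by
      have h1 : 2 * σ 1 * (a 1 t * b 1 t) ≤ σ 1 * ((a 1 t)^2 + (b 1 t)^2) := by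
        nlinarith [sq_nonneg (a 1 t - b 1 t), hσ1]
      have h2 : 2 * (a 1 t * b 1 t) * P t ≤
          2 * (a 1 t * b 1 t) * (σ 1 * (a 1 t * b 1 t) + σ 2 * (1 - a 1 t * b 1 t)) :=
        mul_le_mul_of_nonneg_left hPb (by linarith)
      nlinarith
    rw [hc₃]
    have hxx : 0 ≤ (a 1 t * b 1 t) * (1 - a 1 t * b 1 t) := mul_nonneg hx0 (by linarith)
    have hσσ : 0 ≤ σ 1 - σ 2 := by linarith
    have step1 := mul_nonneg (mul_nonneg (sub_nonneg.2 hpow) hσσ) hxx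
    have step3 := mul_le_mul_of_nonneg_left hinner hsp0
    nlinarith [step1, step3]
  have hx_cont : ContinuousOn (fun u => a 1 u * b 1 u) (Set.Ici 0) :=
    fun u hu => ((hx' u hu).continuousAt).continuousWithinAt
  have hc₃0 : 0 ≤ c₃ := by
    rw [hc₃]
    have := Real.rpow_nonneg hσ1.le ((1:ℝ)-2/(N:ℝ))
    nlinarith [hσ21]
  -- positivity of x
  have hxpos : ∀ t, 0 ≤ t → 0 < a 1 t * b 1 t := by
    by_contra hcon
    push_neg at hcon
    obtain ⟨t₁, ht₁, hx₁⟩ := hcon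
    set E : Set ℝ := {u | 0 ≤ u ∧ a 1 u * b 1 u ≤ 0} with hEdef
    have hEne : E.Nonempty := ⟨t₁, ht₁, hx₁⟩
    have hEbdd : BddBelow E := ⟨0, fun u hu => hu.1⟩
    have hEclosed : IsClosed E := by
      have hEq : E = Set.Ici 0 ∩ (fun u => a 1 u * b 1 u) ⁻¹' Set.Iic 0 := by
        ext u
        simp [hEdef, Set.mem_Ici, Set.mem_Iic, Set.mem_setOf_eq]
      rw [hEq]
      exact hx_cont.preimage_isClosed_of_isClosed isClosed_Ici isClosed_Iic
    set T := sInf E with hTdef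
    have hTE : T ∈ E := hEclosed.csInf_mem hEne hEbdd
    have hT0 : 0 ≤ T := hTE.1
    have hTpos : 0 < T := by
      rcases hT0.lt_or_eq with h | h
      · exact h
      · exfalso; rw [← h] at hTE; exact absurd hTE.2 (not_le.2 hab)
    have hxIco : ∀ u, 0 ≤ u → u < T → 0 < a 1 u * b 1 u := by
      intro u hu huT
      by_contra h
      push_neg at h
      exact absurd (csInf_le hEbdd ⟨hu, h⟩) (not_le.2 huT)
    have hmono : MonotoneOn (fun u => a 1 u * b 1 u) (Set.Icc 0 T) := by
      apply monotoneOn_of_deriv_nonneg (convex_Icc 0 T)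
      · exact hx_cont.mono Set.Icc_subset_Ici_self
      · intro u hu
        rw [interior_Icc] at hu
        exact ((hx' u hu.1.le).differentiableAt).differentiableWithinAt
      · intro u hu
        rw [interior_Icc] at hu
        rw [(hx' u hu.1.le).deriv]
        have hxu : 0 < a 1 u * b 1 u := hxIco u hu.1.le hu.2
        have hkey := hxd_ge u hu.1.le hxu.le
        have hx1 : a 1 u * b 1 u ≤ 1 := hx_le1 u hu.1.le
        nlinarith [mul_nonneg (mul_nonneg hc₃0 hxu.le) (sub_nonneg.2 hx1)]
    have hfin : a 1 0 * b 1 0 ≤ a 1 T * b 1 T :=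
      hmono (Set.mem_Icc.2 ⟨le_rfl, hT0⟩) (Set.mem_Icc.2 ⟨hT0, le_rfl⟩) hT0
    have := hTE.2
    linarith
  -- claim 3
  have h1x0 : 0 < 1 - a 1 0 * b 1 0 := by linarith
  have hApos : 0 < A := by rw [hA]; exact div_pos hab h1x0
  have claim3 : ∀ t, 0 ≤ t → 1 - a 1 t * b 1 t ≤ (1 + A * Real.exp (c₃ * t))⁻¹ := by
    intro t ht
    set w : ℝ → ℝ := fun u => (1 - a 1 u * b 1 u) / (a 1 u * b 1 u) * Real.exp (c₃ * u) with hwdef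
    have hwd : ∀ u, 0 ≤ u → HasDerivAt w
        (Real.exp (c₃*u) / (a 1 u * b 1 u)^2 *
          (c₃ * (a 1 u * b 1 u) * (1 - a 1 u * b 1 u) -
           s u ^ ((1:ℝ)-2/(N:ℝ)) * (σ 1 * ((a 1 u)^2 + (b 1 u)^2) - 2*(a 1 u * b 1 u)*(P u)))) u := by
      intro u hu
      have hxu := hxpos u hu
      have hx := hx' u hu
      have h1 : HasDerivAt (fun v => 1 - a 1 v * b 1 v)
          (0 - s u ^ ((1:ℝ)-2/(N:ℝ)) * (σ 1 * ((a 1 u)^2 + (b 1 u)^2) - 2*(a 1 u * b 1 u)*(P u))) u :=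
        (hasDerivAt_const u (1:ℝ)).sub hx
      have h2 := h1.div hx hxu.ne'
      have h3 : HasDerivAt (fun v => Real.exp (c₃ * v)) (Real.exp (c₃*u) * (c₃ * 1)) u :=
        ((hasDerivAt_id u).const_mul c₃).exp
      have h4 := h2.mul h3
      refine h4.congr_deriv ?_
      simp only [Pi.div_apply]
      field_simp
      ring
    have hwanti : AntitoneOn w (Set.Ici 0) := by
      apply antitoneOn_of_deriv_nonpos (convex_Ici 0)
      · exact fun u hu => ((hwd u hu).continuousAt).continuousWithinAt
      · intro u hu; rw [interior_Ici] at hu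
        exact ((hwd u hu.le).differentiableAt).differentiableWithinAt
      · intro u hu; rw [interior_Ici] at hu
        rw [(hwd u hu.le).deriv]
        have hxu := hxpos u hu.le
        have hkey := hxd_ge u hu.le hxu.le
        have hfac : 0 ≤ Real.exp (c₃*u) / (a 1 u * b 1 u)^2 := by positivity
        exact mul_nonpos_iff.2 (Or.inl ⟨hfac, by linarith⟩)
    have hw0 : w t ≤ w 0 := hwanti (Set.mem_Ici.2 le_rfl) (Set.mem_Ici.2 ht) ht
    rw [hwdef] at hw0
    simp only [mul_zero, Real.exp_zero, mul_one] at hw0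
    have hxt := hxpos t ht
    have hE := Real.exp_pos (c₃ * t)
    rw [div_mul_eq_mul_div, div_le_div_iff₀ hxt hab] at hw0
    -- hw0 : (1 - a 1 t * b 1 t) * Real.exp (c₃ * t) * (a 1 0 * b 1 0) ≤ (1 - a 1 0 * b 1 0) * (a 1 t * b 1 t)
    have hden : 0 < 1 + A * Real.exp (c₃*t) := by positivity
    rw [inv_eq_one_div, le_div_iff₀ hden]
    have hA' : A * (1 - a 1 0 * b 1 0) = a 1 0 * b 1 0 := by
      rw [hA]; field_simp
    have h6 : A * Real.exp (c₃*t) * (1 - a 1 t * b 1 t) * (1 - a 1 0 * b 1 0) ≤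
        (1 - a 1 0 * b 1 0) * (a 1 t * b 1 t) := by
      calc A * Real.exp (c₃*t) * (1 - a 1 t * b 1 t) * (1 - a 1 0 * b 1 0)
          = (1 - a 1 t * b 1 t) * Real.exp (c₃*t) * (A * (1 - a 1 0 * b 1 0)) := by ring
        _ = (1 - a 1 t * b 1 t) * Real.exp (c₃*t) * (a 1 0 * b 1 0) := by rw [hA']
        _ ≤ (1 - a 1 0 * b 1 0) * (a 1 t * b 1 t) := hw0
    nlinarith [h6, h1x0]
  intro t ht
  exact ⟨hs_lb t ht, claim2 t ht, claim3 t ht⟩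
end

section
/- Let a ∈ ℝ^{dy} and b ∈ ℝ^{dx} be unit vectors (∑_{i=1}^{dy} a_i² = ∑_{j=1}^{dx} b_j² = 1), set P := ∑_{j=1}^{d} s_j a_j b_j, and suppose that P·a_i = s_i·b_i for every 1 ≤ i ≤ dy and P·b_i = s_i·a_i for every 1 ≤ i ≤ dx (with s_i := 0 for i > d). Then either a_i = 0 and b_i = 0 for every 1 ≤ i ≤ d, or there exists an index i with 1 ≤ i ≤ d such that |a_i| = 1, |b_i| = 1, and a_j = 0, b_j = 0 for every j ≠ i; i.e., the pair (a, b) is (up to signs) a singular-vector pair of the target, or is orthogonal to all its singular vectors. -/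
open Filter Topology

theorem stmt17
    (d dy dx : ℕ) (hd : 1 ≤ d) (hdy : d ≤ dy) (hdx : d ≤ dx)
    (σ : ℕ → ℝ)
    (hσpos : ∀ i, 1 ≤ i → i ≤ d → 0 < σ i)
    (hσmono : ∀ i j, 1 ≤ i → i < j → j ≤ d → σ j < σ i)
    (hσzero : ∀ i, d < i → σ i = 0)
    (a b : ℕ → ℝ) (P : ℝ)
    (ha_norm : ∑ i ∈ Finset.Icc 1 dy, (a i) ^ 2 = 1)
    (hb_norm : ∑ j ∈ Finset.Icc 1 dx, (b j) ^ 2 = 1)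
    (hP : P = ∑ j ∈ Finset.Icc 1 d, σ j * a j * b j)
    (hstat_a : ∀ i, 1 ≤ i → i ≤ dy → P * a i = σ i * b i)
    (hstat_b : ∀ i, 1 ≤ i → i ≤ dx → P * b i = σ i * a i) :
    (∀ i, 1 ≤ i → i ≤ d → a i = 0 ∧ b i = 0) ∨
    (∃ i, 1 ≤ i ∧ i ≤ d ∧ |a i| = 1 ∧ |b i| = 1 ∧
      (∀ j, 1 ≤ j → j ≤ dy → j ≠ i → a j = 0) ∧
      (∀ j, 1 ≤ j → j ≤ dx → j ≠ i → b j = 0)) := by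
  have hinj : ∀ i j, 1 ≤ i → i ≤ d → 1 ≤ j → j ≤ d → σ i = σ j → i = j := by
    intro i j hi1 hid hj1 hjd h
    by_contra hne
    rcases lt_or_gt_of_ne hne with h' | h'
    · exact ne_of_lt (hσmono i j hi1 h' hjd) h.symm
    · exact ne_of_lt (hσmono j i hj1 h' hid) h
  by_cases hP0 : P = 0
  · left
    intro i hi1 hid
    have hb := hstat_a i hi1 (hid.trans hdy)
    have ha := hstat_b i hi1 (hid.trans hdx)
    rw [hP0, zero_mul] at hb ha
    have hσ := hσpos i hi1 hid
    constructor
    · rcases mul_eq_zero.mp ha.symm with h | h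
      · exact absurd h hσ.ne'
      · exact h
    · rcases mul_eq_zero.mp hb.symm with h | h
      · exact absurd h hσ.ne'
      · exact h
  · right
    have haz : ∀ j, d < j → j ≤ dy → a j = 0 := by
      intro j hj hjdy
      have e := hstat_a j (hd.trans hj.le) hjdy
      rw [hσzero j hj, zero_mul] at e
      exact (mul_eq_zero.mp e).resolve_left hP0
    have hbz : ∀ j, d < j → j ≤ dx → b j = 0 := by
      intro j hj hjdx
      have e := hstat_b j (hd.trans hj.le) hjdx
      rw [hσzero j hj, zero_mul] at e
      exact (mul_eq_zero.mp e).resolve_left hP0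
    have hkey_a : ∀ j, 1 ≤ j → j ≤ d → a j ≠ 0 → σ j ^ 2 = P ^ 2 := by
      intro j h1 hjd hne
      have e1 := hstat_a j h1 (hjd.trans hdy)
      have e2 := hstat_b j h1 (hjd.trans hdx)
      have h0 : (σ j ^ 2 - P ^ 2) * a j = 0 := by
        linear_combination (-(σ j)) * e2 - P * e1
      have := (mul_eq_zero.mp h0).resolve_right hne
      linarith
    have hkey_b : ∀ j, 1 ≤ j → j ≤ d → b j ≠ 0 → σ j ^ 2 = P ^ 2 := by
      intro j h1 hjd hne
      have e1 := hstat_a j h1 (hjd.trans hdy)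
      have e2 := hstat_b j h1 (hjd.trans hdx)
      have h0 : (σ j ^ 2 - P ^ 2) * b j = 0 := by
        linear_combination (-(σ j)) * e1 - P * e2
      have := (mul_eq_zero.mp h0).resolve_right hne
      linarith
    have hsuma : ∑ i ∈ Finset.Icc 1 d, a i ^ 2 = 1 := by
      rw [← ha_norm]
      apply Finset.sum_subset (Finset.Icc_subset_Icc_right hdy)
      intro x hx hx'
      simp only [Finset.mem_Icc] at hx hx'
      rw [haz x (by omega) hx.2]; ring
    have hsumb : ∑ i ∈ Finset.Icc 1 d, b i ^ 2 = 1 := by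
      rw [← hb_norm]
      apply Finset.sum_subset (Finset.Icc_subset_Icc_right hdx)
      intro x hx hx'
      simp only [Finset.mem_Icc] at hx hx'
      rw [hbz x (by omega) hx.2]; ring
    have hexa : ∃ i ∈ Finset.Icc 1 d, a i ≠ 0 := by
      by_contra h
      push_neg at h
      have h0 : ∑ i ∈ Finset.Icc 1 d, a i ^ 2 = 0 :=
        Finset.sum_eq_zero (fun i hi => by rw [h i hi]; ring)
      linarith
    obtain ⟨i, hiM, hai⟩ := hexa
    rw [Finset.mem_Icc] at hiM
    have hPi : σ i ^ 2 = P ^ 2 := hkey_a i hiM.1 hiM.2 hai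
    have hazero : ∀ j, 1 ≤ j → j ≤ dy → j ≠ i → a j = 0 := by
      intro j h1 hjdy hne
      by_cases hjd : j ≤ d
      · by_contra hja
        have hPj := hkey_a j h1 hjd hja
        have hσeq : σ j = σ i := by
          have hp1 := hσpos j h1 hjd
          have hp2 := hσpos i hiM.1 hiM.2
          nlinarith
        exact hne (hinj j i h1 hjd hiM.1 hiM.2 hσeq)
      · exact haz j (by omega) hjdy
    have hbzero : ∀ j, 1 ≤ j → j ≤ dx → j ≠ i → b j = 0 := by
      intro j h1 hjdx hne
      by_cases hjd : j ≤ d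
      · by_contra hjb
        have hPj := hkey_b j h1 hjd hjb
        have hσeq : σ j = σ i := by
          have hp1 := hσpos j h1 hjd
          have hp2 := hσpos i hiM.1 hiM.2
          nlinarith
        exact hne (hinj j i h1 hjd hiM.1 hiM.2 hσeq)
      · exact hbz j (by omega) hjdx
    have hai2 : a i ^ 2 = 1 := by
      have hs : ∑ j ∈ Finset.Icc 1 d, a j ^ 2 = a i ^ 2 := by
        apply Finset.sum_eq_single_of_mem i (Finset.mem_Icc.mpr hiM)
        intro j hj hne
        rw [Finset.mem_Icc] at hj
        simp [hazero j hj.1 (hj.2.trans hdy) hne]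
      rw [hs] at hsuma
      exact hsuma
    have hbi2 : b i ^ 2 = 1 := by
      have hs : ∑ j ∈ Finset.Icc 1 d, b j ^ 2 = b i ^ 2 := by
        apply Finset.sum_eq_single_of_mem i (Finset.mem_Icc.mpr hiM)
        intro j hj hne
        rw [Finset.mem_Icc] at hj
        simp [hbzero j hj.1 (hj.2.trans hdx) hne]
      rw [hs] at hsumb
      exact hsumb
    refine ⟨i, hiM.1, hiM.2, ?_, ?_, hazero, hbzero⟩
    · have h2 : (a i - 1) * (a i + 1) = 0 := by nlinarith
      rcases mul_eq_zero.mp h2 with h | h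
      · rw [show a i = 1 by linarith]; simp
      · rw [show a i = -1 by linarith]; simp
    · have h2 : (b i - 1) * (b i + 1) = 0 := by nlinarith
      rcases mul_eq_zero.mp h2 with h | h
      · rw [show b i = 1 by linarith]; simp
      · rw [show b i = -1 by linarith]; simp
end

section
/- Suppose the reduced gradient-flow system holds, and at some time t₀ ≥ 0 one has P(t₀) = s(t₀) > 0 and there exists an index i with either s_i·b_i(t₀) − a_i(t₀)·P(t₀) ≠ 0 (for some 1 ≤ i ≤ dy) or s_i·a_i(t₀) − b_i(t₀)·P(t₀) ≠ 0 (for some 1 ≤ i ≤ dx). Then the derivative of the function t ↦ P(t) − s(t) at t₀ is strictly positive. -/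
open Filter Topology

theorem stmt18
    (N d dy dx : ℕ) (hN : 2 ≤ N) (hd : 1 ≤ d) (hdy : d ≤ dy) (hdx : d ≤ dx)
    (σ : ℕ → ℝ)
    (hσpos : ∀ i, 1 ≤ i → i ≤ d → 0 < σ i)
    (hσmono : ∀ i j, 1 ≤ i → i < j → j ≤ d → σ j < σ i)
    (hσzero : ∀ i, d < i → σ i = 0)
    (s : ℝ → ℝ) (a b : ℕ → ℝ → ℝ) (P : ℝ → ℝ)
    (hs_nonneg : ∀ t, 0 ≤ t → 0 ≤ s t)
    (ha_norm : ∀ t, 0 ≤ t → ∑ i ∈ Finset.Icc 1 dy, (a i t) ^ 2 = 1)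
    (hb_norm : ∀ t, 0 ≤ t → ∑ j ∈ Finset.Icc 1 dx, (b j t) ^ 2 = 1)
    (hP : ∀ t, P t = ∑ j ∈ Finset.Icc 1 d, σ j * a j t * b j t)
    (hs' : ∀ t, 0 ≤ t →
      HasDerivAt s ((N : ℝ) * s t ^ ((2 : ℝ) - 2 / (N : ℝ)) * (P t - s t)) t)
    (ha' : ∀ i, 1 ≤ i → i ≤ dy → ∀ t, 0 ≤ t →
      HasDerivAt (a i) (s t ^ ((1 : ℝ) - 2 / (N : ℝ)) * (σ i * b i t - a i t * P t)) t)
    (hb' : ∀ j, 1 ≤ j → j ≤ dx → ∀ t, 0 ≤ t →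
      HasDerivAt (b j) (s t ^ ((1 : ℝ) - 2 / (N : ℝ)) * (σ j * a j t - b j t * P t)) t)
    (t₀ : ℝ) (ht₀ : 0 ≤ t₀) (heq : P t₀ = s t₀) (hpos : 0 < s t₀)
    (hnz : (∃ i, 1 ≤ i ∧ i ≤ dy ∧ σ i * b i t₀ - a i t₀ * P t₀ ≠ 0) ∨
           (∃ i, 1 ≤ i ∧ i ≤ dx ∧ σ i * a i t₀ - b i t₀ * P t₀ ≠ 0)) :
    ∃ D : ℝ, HasDerivAt (fun t => P t - s t) D t₀ ∧ 0 < D := by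
  classical
  set c : ℝ := s t₀ ^ ((1 : ℝ) - 2 / (N : ℝ)) with hc_def
  have hc : 0 < c := Real.rpow_pos_of_pos hpos _
  set D' : ℝ := ∑ j ∈ Finset.Icc 1 d,
      (σ j * (c * (σ j * b j t₀ - a j t₀ * P t₀)) * b j t₀
        + σ j * a j t₀ * (c * (σ j * a j t₀ - b j t₀ * P t₀))) with hD'_def
  -- derivative of P
  have hg : HasDerivAt (fun t => ∑ j ∈ Finset.Icc 1 d, σ j * a j t * b j t) D' t₀ := by
    apply HasDerivAt.fun_sum
    intro j hj
    have hj' := Finset.mem_Icc.mp hj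
    have haj := (ha' j hj'.1 (le_trans hj'.2 hdy) t₀ ht₀).const_mul (σ j)
    have hbj := hb' j hj'.1 (le_trans hj'.2 hdx) t₀ ht₀
    exact haj.mul hbj
  have hderivP : HasDerivAt P D' t₀ :=
    hg.congr_of_eventuallyEq (Filter.Eventually.of_forall hP)
  -- derivative of s is zero at t₀
  have hs0 : HasDerivAt s 0 t₀ := by
    have h := hs' t₀ ht₀
    rwa [heq, sub_self, mul_zero] at h
  have hderiv : HasDerivAt (fun t => P t - s t) D' t₀ := by
    simpa using hderivP.fun_sub hs0
  refine ⟨D', hderiv, ?_⟩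
  -- now the algebra
  have hsuby : Finset.Icc 1 d ⊆ Finset.Icc 1 dy := Finset.Icc_subset_Icc_right hdy
  have hsubx : Finset.Icc 1 d ⊆ Finset.Icc 1 dx := Finset.Icc_subset_Icc_right hdx
  have hPy : ∑ i ∈ Finset.Icc 1 dy, σ i * a i t₀ * b i t₀ = P t₀ := by
    rw [hP t₀]
    refine (Finset.sum_subset hsuby fun i hi hni => ?_).symm
    have hzi : σ i = 0 := by
      apply hσzero
      simp only [Finset.mem_Icc] at hi hni
      omega
    simp [hzi]
  have hPx : ∑ j ∈ Finset.Icc 1 dx, σ j * a j t₀ * b j t₀ = P t₀ := by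
    rw [hP t₀]
    refine (Finset.sum_subset hsubx fun i hi hni => ?_).symm
    have hzi : σ i = 0 := by
      apply hσzero
      simp only [Finset.mem_Icc] at hi hni
      omega
    simp [hzi]
  have ha_n := ha_norm t₀ ht₀
  have hb_n := hb_norm t₀ ht₀
  set SA : ℝ := ∑ i ∈ Finset.Icc 1 dy, (σ i * b i t₀ - a i t₀ * P t₀) ^ 2 with hSA_def
  set SB : ℝ := ∑ j ∈ Finset.Icc 1 dx, (σ j * a j t₀ - b j t₀ * P t₀) ^ 2 with hSB_def
  have hA0 : ∑ i ∈ Finset.Icc 1 dy, (σ i * b i t₀ - a i t₀ * P t₀) * a i t₀ = 0 := by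
    have h1 : ∀ i ∈ Finset.Icc 1 dy, (σ i * b i t₀ - a i t₀ * P t₀) * a i t₀
        = σ i * a i t₀ * b i t₀ - P t₀ * (a i t₀) ^ 2 := fun i _ => by ring
    rw [Finset.sum_congr rfl h1, Finset.sum_sub_distrib, ← Finset.mul_sum, ha_n, hPy,
      mul_one, sub_self]
  have hB0 : ∑ j ∈ Finset.Icc 1 dx, (σ j * a j t₀ - b j t₀ * P t₀) * b j t₀ = 0 := by
    have h1 : ∀ j ∈ Finset.Icc 1 dx, (σ j * a j t₀ - b j t₀ * P t₀) * b j t₀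
        = σ j * a j t₀ * b j t₀ - P t₀ * (b j t₀) ^ 2 := fun j _ => by ring
    rw [Finset.sum_congr rfl h1, Finset.sum_sub_distrib, ← Finset.mul_sum, hb_n, hPx,
      mul_one, sub_self]
  have hSA : SA = ∑ i ∈ Finset.Icc 1 d, σ i * ((σ i * b i t₀ - a i t₀ * P t₀) * b i t₀) := by
    have h1 : ∀ i ∈ Finset.Icc 1 dy, (σ i * b i t₀ - a i t₀ * P t₀) ^ 2
        = σ i * ((σ i * b i t₀ - a i t₀ * P t₀) * b i t₀)
          - P t₀ * ((σ i * b i t₀ - a i t₀ * P t₀) * a i t₀) := fun i _ => by ring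
    rw [hSA_def, Finset.sum_congr rfl h1, Finset.sum_sub_distrib, ← Finset.mul_sum, hA0,
      mul_zero, sub_zero]
    refine (Finset.sum_subset hsuby fun i hi hni => ?_).symm
    have hzi : σ i = 0 := by
      apply hσzero
      simp only [Finset.mem_Icc] at hi hni
      omega
    simp [hzi]
  have hSB : SB = ∑ j ∈ Finset.Icc 1 d, σ j * ((σ j * a j t₀ - b j t₀ * P t₀) * a j t₀) := by
    have h1 : ∀ j ∈ Finset.Icc 1 dx, (σ j * a j t₀ - b j t₀ * P t₀) ^ 2
        = σ j * ((σ j * a j t₀ - b j t₀ * P t₀) * a j t₀)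
          - P t₀ * ((σ j * a j t₀ - b j t₀ * P t₀) * b j t₀) := fun j _ => by ring
    rw [hSB_def, Finset.sum_congr rfl h1, Finset.sum_sub_distrib, ← Finset.mul_sum, hB0,
      mul_zero, sub_zero]
    refine (Finset.sum_subset hsubx fun i hi hni => ?_).symm
    have hzi : σ i = 0 := by
      apply hσzero
      simp only [Finset.mem_Icc] at hi hni
      omega
    simp [hzi]
  have hDval : D' = c * SA + c * SB := by
    rw [hSA, hSB, hD'_def, Finset.mul_sum, Finset.mul_sum, ← Finset.sum_add_distrib]
    refine Finset.sum_congr rfl fun j _ => by ring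
  have hSAnn : 0 ≤ SA := Finset.sum_nonneg fun i _ => sq_nonneg _
  have hSBnn : 0 ≤ SB := Finset.sum_nonneg fun j _ => sq_nonneg _
  rw [hDval]
  rcases hnz with ⟨i, h1, h2, hne⟩ | ⟨i, h1, h2, hne⟩
  · have hle : (σ i * b i t₀ - a i t₀ * P t₀) ^ 2 ≤ SA := by
      rw [hSA_def]
      exact Finset.single_le_sum (f := fun j => (σ j * b j t₀ - a j t₀ * P t₀) ^ 2)
        (fun j _ => sq_nonneg _) (Finset.mem_Icc.mpr ⟨h1, h2⟩)
    have hpos' : 0 < (σ i * b i t₀ - a i t₀ * P t₀) ^ 2 := by positivity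
    nlinarith [mul_pos hc (lt_of_lt_of_le hpos' hle), mul_nonneg hc.le hSBnn]
  · have hle : (σ i * a i t₀ - b i t₀ * P t₀) ^ 2 ≤ SB := by
      rw [hSB_def]
      exact Finset.single_le_sum (f := fun j => (σ j * a j t₀ - b j t₀ * P t₀) ^ 2)
        (fun j _ => sq_nonneg _) (Finset.mem_Icc.mpr ⟨h1, h2⟩)
    have hpos' : 0 < (σ i * a i t₀ - b i t₀ * P t₀) ^ 2 := by positivity
    nlinarith [mul_pos hc (lt_of_lt_of_le hpos' hle), mul_nonneg hc.le hSAnn]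
end

section
/- Let W : [0,∞) → ℝ^{dy×dx}, s : [0,∞) → ℝ, u : [0,∞) → ℝ^{dy}, v : [0,∞) → ℝ^{dx} be differentiable functions such that for all t ≥ 0: W(t) = s(t)·u(t)·v(t)ᵀ, ‖u(t)‖ = ‖v(t)‖ = 1 (Euclidean norm), and s(t) > 0. Then for all t ≥ 0, u(t)ᵀu'(t) = 0 and v(t)ᵀv'(t) = 0, and the singular-vector derivatives satisfy u'(t) = s(t)^{−1}·(I_{dy} − u(t)u(t)ᵀ)·W'(t)·v(t) and v'(t) = s(t)^{−1}·(I_{dx} − v(t)v(t)ᵀ)·W'(t)ᵀ·u(t). -/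
open Filter Topology

lemma deriv_eq_on_Ici {f g : ℝ → ℝ} {f' g' : ℝ} {t : ℝ} (ht : 0 ≤ t)
    (hf : HasDerivAt f f' t) (hg : HasDerivAt g g' t)
    (heq : ∀ x, 0 ≤ x → f x = g x) : f' = g' := by
  have h1 := hf.hasDerivWithinAt (s := Set.Ici 0)
  have h2 : HasDerivWithinAt f g' (Set.Ici 0) t :=
    (hg.hasDerivWithinAt (s := Set.Ici 0)).congr (fun x hx => heq x hx) (heq t ht)
  exact UniqueDiffWithinAt.eq_deriv _ (uniqueDiffOn_Ici 0 t ht) h1 h2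

theorem stmt19
    (dy dx : ℕ) (hdy : 1 ≤ dy) (hdx : 1 ≤ dx)
    (W W' : ℝ → Fin dy → Fin dx → ℝ) (s s' : ℝ → ℝ)
    (u u' : ℝ → Fin dy → ℝ) (v v' : ℝ → Fin dx → ℝ)
    (hW : ∀ t, 0 ≤ t → ∀ i j, W t i j = s t * u t i * v t j)
    (hu_norm : ∀ t, 0 ≤ t → ∑ i, (u t i) ^ 2 = 1)
    (hv_norm : ∀ t, 0 ≤ t → ∑ j, (v t j) ^ 2 = 1)
    (hs_pos : ∀ t, 0 ≤ t → 0 < s t)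
    (hW' : ∀ t, 0 ≤ t → ∀ i j, HasDerivAt (fun τ => W τ i j) (W' t i j) t)
    (hs' : ∀ t, 0 ≤ t → HasDerivAt s (s' t) t)
    (hu' : ∀ t, 0 ≤ t → ∀ i, HasDerivAt (fun τ => u τ i) (u' t i) t)
    (hv' : ∀ t, 0 ≤ t → ∀ j, HasDerivAt (fun τ => v τ j) (v' t j) t) :
    ∀ t, 0 ≤ t →
      (∑ i, u t i * u' t i = 0) ∧
      (∑ j, v t j * v' t j = 0) ∧
      (∀ i, u' t i = (s t)⁻¹ *
        ((∑ j, W' t i j * v t j) - u t i * ∑ k, ∑ j, u t k * W' t k j * v t j)) ∧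
      (∀ j, v' t j = (s t)⁻¹ *
        ((∑ i, W' t i j * u t i) - v t j * ∑ i, ∑ k, u t i * W' t i k * v t k)) := by
  intro t ht
  have hs := hs_pos t ht
  have hu2 := hu_norm t ht
  have hv2 := hv_norm t ht
  -- derivative of ∑ u² = 1
  have huu : ∑ i, u t i * u' t i = 0 := by
    have hd : HasDerivAt (fun τ => ∑ i, u τ i * u τ i)
        (∑ i, (u' t i * u t i + u t i * u' t i)) t :=
      HasDerivAt.fun_sum (fun i _ => (hu' t ht i).mul (hu' t ht i))
    have hc : HasDerivAt (fun _ : ℝ => (1 : ℝ)) 0 t := hasDerivAt_const _ _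
    have h0 : ∑ i, (u' t i * u t i + u t i * u' t i) = 0 :=
      deriv_eq_on_Ici ht hd hc (fun x hx => by simpa [sq] using hu_norm x hx)
    have h2 : ∑ i, u t i * u' t i
        = (1/2) * ∑ i, (u' t i * u t i + u t i * u' t i) := by
      rw [Finset.mul_sum]; exact Finset.sum_congr rfl fun i _ => by ring
    rw [h2, h0, mul_zero]
  have hvv : ∑ j, v t j * v' t j = 0 := by
    have hd : HasDerivAt (fun τ => ∑ j, v τ j * v τ j)
        (∑ j, (v' t j * v t j + v t j * v' t j)) t :=
      HasDerivAt.fun_sum (fun j _ => (hv' t ht j).mul (hv' t ht j))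
    have hc : HasDerivAt (fun _ : ℝ => (1 : ℝ)) 0 t := hasDerivAt_const _ _
    have h0 : ∑ j, (v' t j * v t j + v t j * v' t j) = 0 :=
      deriv_eq_on_Ici ht hd hc (fun x hx => by simpa [sq] using hv_norm x hx)
    have h2 : ∑ j, v t j * v' t j
        = (1/2) * ∑ j, (v' t j * v t j + v t j * v' t j) := by
      rw [Finset.mul_sum]; exact Finset.sum_congr rfl fun j _ => by ring
    rw [h2, h0, mul_zero]
  -- product rule for W'
  have hWd : ∀ i j, W' t i j = s' t * u t i * v t j + s t * u' t i * v t j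
      + s t * u t i * v' t j := by
    intro i j
    have hd : HasDerivAt (fun τ => s τ * u τ i * v τ j)
        ((s' t * u t i + s t * u' t i) * v t j + s t * u t i * v' t j) t :=
      ((hs' t ht).mul (hu' t ht i)).mul (hv' t ht j)
    have := deriv_eq_on_Ici ht (hW' t ht i j) hd (fun x hx => hW x hx i j)
    rw [this]; ring
  -- S1 : row contraction
  have S1 : ∀ i, ∑ j, W' t i j * v t j = s' t * u t i + s t * u' t i := by
    intro i
    have : ∑ j, W' t i j * v t j
        = ∑ j, (s' t * u t i * v t j ^ 2 + s t * u' t i * v t j ^ 2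
            + s t * u t i * (v t j * v' t j)) :=
      Finset.sum_congr rfl fun j _ => by rw [hWd i j]; ring
    rw [this, Finset.sum_add_distrib, Finset.sum_add_distrib,
      ← Finset.mul_sum, ← Finset.mul_sum, ← Finset.mul_sum, hv2, hvv]
    ring
  have T1 : ∀ j, ∑ i, W' t i j * u t i = s' t * v t j + s t * v' t j := by
    intro j
    have : ∑ i, W' t i j * u t i
        = ∑ i, (s' t * v t j * u t i ^ 2 + s t * v' t j * u t i ^ 2
            + s t * v t j * (u t i * u' t i)) :=
      Finset.sum_congr rfl fun i _ => by rw [hWd i j]; ring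
    rw [this, Finset.sum_add_distrib, Finset.sum_add_distrib,
      ← Finset.mul_sum, ← Finset.mul_sum, ← Finset.mul_sum, hu2, huu]
    ring
  have S2 : ∑ k, ∑ j, u t k * W' t k j * v t j = s' t := by
    have : ∑ k, ∑ j, u t k * W' t k j * v t j
        = ∑ k, (s' t * u t k ^ 2 + s t * (u t k * u' t k)) := by
      refine Finset.sum_congr rfl fun k _ => ?_
      have h : ∑ j, u t k * W' t k j * v t j = u t k * ∑ j, W' t k j * v t j := by
        rw [Finset.mul_sum]; exact Finset.sum_congr rfl fun j _ => by ring
      rw [h, S1 k]; ring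
    rw [this, Finset.sum_add_distrib, ← Finset.mul_sum, ← Finset.mul_sum, hu2, huu]
    ring
  have T2 : ∑ i, ∑ k, u t i * W' t i k * v t k = s' t := S2
  refine ⟨huu, hvv, fun i => ?_, fun j => ?_⟩
  · rw [S1 i, S2]; field_simp; ring
  · have h : ∑ i, ∑ k, u t i * W' t i k * v t k = s' t := T2
    have h2 : ∑ i, W' t i j * u t i = s' t * v t j + s t * v' t j := T1 j
    rw [h2, h]; field_simp; ring
end
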